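/- arXiv:2412.10703 — 6 statements merged into one kernel-verified Lean document; each statement's English description precedes it below -/
import Mathlib

section
/- Let N be a positive integer, G > 0, η ∈ (0,1), γ ∈ (0, G/η), and let 𝒳 be a nonempty set. Let g', g : 𝒳 → ℝ^N have components g'^n, g^n with |g'^n(x)| ≤ G and |g^n(x)| ≤ G for all x ∈ 𝒳 and all n ∈ {1,…,N}. Let x̄ ∈ 𝒳, let Q^n ∈ [γ, G/η] for each n, and define Q̂^n = max{(1−η)·Q^n + [g^n(x̄)]_+ , γ}. Let B ≥ 0 satisfy (Σ_{n=1}^N (g^n(x) − g'^n(x))²)^{1/2} ≤ B for all x ∈ 𝒳. Then (1/2)·Σ_{n=1}^N (Q̂^n − γ)² − (1/2)·Σ_{n=1}^N (Q^n − γ)² ≤ Σ_{n=1}^N Q^n·[g'^n(x̄)]_+ − γ·Σ_{n=1}^N [g^n(x̄)]_+ + (G·√N/η)·B + 2·N·G². -/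
/-!
Coordinatewise, `Q̂ - γ = [(1 - η) Q + p - γ]_+` with `p = [g(x̄)]_+`, so the drift is at most
`(Q - γ)(p - η Q) + (p - η Q)² / 2 ≤ Q p - γ p + G² / 2`, using `η Q (Q - γ) ≥ 0` and
`p, η Q ∈ [0, G]`. Replacing `Q p` by `Q p'` with `p' = [g'(x̄)]_+` costs at most
`(G / η) |g(x̄) - g'(x̄)|`, since `x ↦ [x]_+` is 1-Lipschitz, and Cauchy–Schwarz bounds the sum
of these deviations by `√N · B`.
-/

open Finset

theorem Finset.sum_abs_le_sqrt_card_mul_sqrt_sum_sq {ι : Type*} (s : Finset ι) (f : ι → ℝ) :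
    ∑ i ∈ s, |f i| ≤ √(#s : ℝ) * √(∑ i ∈ s, f i ^ 2) := by
  rw [← Real.sqrt_mul (Nat.cast_nonneg _)]
  apply Real.le_sqrt_of_sq_le
  simpa only [sq_abs] using sq_sum_le_card_mul_sum_sq (s := s) (f := fun i => |f i|)

theorem sq_max_sub_le_sq_sub (a c : ℝ) : (max a c - c) ^ 2 ≤ (a - c) ^ 2 := by
  rw [← max_sub_sub_right, sub_self]
  rcases le_total (a - c) 0 with h | h
  · rw [max_eq_right h, zero_pow two_ne_zero]; positivity
  · rw [max_eq_left h]

theorem half_sq_queue_step_sub_le {Q γ η p G : ℝ} (hγ : 0 ≤ γ) (hQ : γ ≤ Q) (hη : 0 ≤ η)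
    (hp : 0 ≤ p) (hpG : p ≤ G) (hηQ : η * Q ≤ G) :
    1 / 2 * (max ((1 - η) * Q + p) γ - γ) ^ 2 - 1 / 2 * (Q - γ) ^ 2 ≤
      Q * p - γ * p + G ^ 2 / 2 := by
  have hclip := sq_max_sub_le_sq_sub ((1 - η) * Q + p) γ
  have hcross : 0 ≤ η * Q * (Q - γ) :=
    mul_nonneg (mul_nonneg hη (hγ.trans hQ)) (sub_nonneg.2 hQ)
  have hsq : (p - η * Q) ^ 2 ≤ G ^ 2 := by
    have : 0 ≤ η * Q := mul_nonneg hη (hγ.trans hQ)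
    exact sq_le_sq' (by linarith) (by linarith)
  nlinarith

theorem mul_max_zero_le_add_mul_abs_sub {Q K : ℝ} (hQ : 0 ≤ Q) (hQK : Q ≤ K) (a b : ℝ) :
    Q * max a 0 ≤ Q * max b 0 + K * |a - b| := by
  have hlip : max a 0 - max b 0 ≤ |a - b| := (le_abs_self _).trans (abs_max_sub_max_le_abs a b 0)
  nlinarith [abs_nonneg (a - b)]

theorem coldq_lyapunov_drift_bound_general
    {X : Type*}
    (N : ℕ) (G η γ : ℝ)
    (hη0 : 0 < η)
    (hγ0 : 0 < γ)
    (g' g : Fin N → X → ℝ)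
    (hg : ∀ n x, |g n x| ≤ G)
    (xb : X) (Q : Fin N → ℝ)
    (hQl : ∀ n, γ ≤ Q n) (hQu : ∀ n, Q n ≤ G / η)
    (Qh : Fin N → ℝ)
    (hQh : ∀ n, Qh n = max ((1 - η) * Q n + max (g n xb) 0) γ)
    (B : ℝ)
    (hB : ∀ x, Real.sqrt (∑ n, (g n x - g' n x) ^ 2) ≤ B) :
    (1 / 2) * ∑ n, (Qh n - γ) ^ 2 - (1 / 2) * ∑ n, (Q n - γ) ^ 2 ≤
      ∑ n, Q n * max (g' n xb) 0 - γ * ∑ n, max (g n xb) 0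
        + (G * Real.sqrt N / η) * B + 2 * N * G ^ 2 := by
  have hcoord : ∀ n, 1 / 2 * (Qh n - γ) ^ 2 - 1 / 2 * (Q n - γ) ^ 2 ≤
      Q n * max (g' n xb) 0 - γ * max (g n xb) 0 + G / η * |g n xb - g' n xb| + G ^ 2 / 2 := by
    intro n
    have hQ0 : 0 ≤ Q n := hγ0.le.trans (hQl n)
    have hstep := half_sq_queue_step_sub_le hγ0.le (hQl n) hη0.le (le_max_right (g n xb) 0)
      (max_le (abs_le.1 (hg n xb)).2 ((abs_nonneg _).trans (hg n xb)))
      ((le_div_iff₀' hη0).1 (hQu n))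
    have hshift := mul_max_zero_le_add_mul_abs_sub hQ0 (hQu n) (g n xb) (g' n xb)
    rw [hQh n]
    linarith
  have hdev : ∑ n, |g n xb - g' n xb| ≤ √(N : ℝ) * B := by
    refine (sum_abs_le_sqrt_card_mul_sqrt_sum_sq univ _).trans ?_
    rw [card_univ, Fintype.card_fin]
    exact mul_le_mul_of_nonneg_left (hB xb) (Real.sqrt_nonneg _)
  have hsum := sum_le_sum fun n (_ : n ∈ univ) => hcoord n
  simp only [sum_add_distrib, sum_sub_distrib, ← mul_sum, sum_const, card_univ,
    Fintype.card_fin, nsmul_eq_mul] at hsum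
  rcases Nat.eq_zero_or_pos N with rfl | hN
  · simp
  have hGη : 0 ≤ G / η := (hγ0.le.trans (hQl ⟨0, hN⟩)).trans (hQu _)
  have hNG : 0 ≤ (N : ℝ) * G ^ 2 := by positivity
  have hdrift := mul_le_mul_of_nonneg_left hdev hGη
  rw [show G * √(N : ℝ) / η * B = G / η * (√(N : ℝ) * B) by ring]
  linarith

/-- One-step Lyapunov drift bound (Lemma 2 of COLDQ, single time-step version). -/
theorem coldq_lyapunov_drift_bound
    {X : Type*} [Nonempty X]
    (N : ℕ) (hN : 0 < N) (G η γ : ℝ)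
    (hG : 0 < G) (hη0 : 0 < η) (hη1 : η < 1)
    (hγ0 : 0 < γ) (hγG : γ < G / η)
    (g' g : Fin N → X → ℝ)
    (hg' : ∀ n x, |g' n x| ≤ G) (hg : ∀ n x, |g n x| ≤ G)
    (xb : X) (Q : Fin N → ℝ)
    (hQl : ∀ n, γ ≤ Q n) (hQu : ∀ n, Q n ≤ G / η)
    (Qh : Fin N → ℝ)
    (hQh : ∀ n, Qh n = max ((1 - η) * Q n + max (g n xb) 0) γ)
    (B : ℝ) (hB0 : 0 ≤ B)
    (hB : ∀ x, Real.sqrt (∑ n, (g n x - g' n x) ^ 2) ≤ B) :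
    (1 / 2) * ∑ n, (Qh n - γ) ^ 2 - (1 / 2) * ∑ n, (Q n - γ) ^ 2 ≤
      ∑ n, Q n * max (g' n xb) 0 - γ * ∑ n, max (g n xb) 0
        + (G * Real.sqrt N / η) * B + 2 * N * G ^ 2 :=
  coldq_lyapunov_drift_bound_general N G η γ hη0 hγ0 g' g hg xb Q hQl hQu Qh hQh B hB
end

section
/- Let 𝒳 be a convex subset of Euclidean space ℝ^p with ‖x − y‖ ≤ R for all x, y ∈ 𝒳 (R > 0). Let f : 𝒳 → ℝ be convex, let x_{prev} ∈ 𝒳, and let v ∈ ℝ^p satisfy ‖v‖ ≤ D and f(y) ≥ f(x_{prev}) + ⟨v, y − x_{prev}⟩ for all y ∈ 𝒳 (v is a subgradient of f at x_{prev} with norm at most D). Let g^1,…,g^N : 𝒳 → ℝ be convex, let Q^1,…,Q^N ≥ 0, and let 0 < α ≤ α' be reals. Let x* ∈ 𝒳 satisfy g^n(x*) ≤ 0 for all n, and let x*' ∈ 𝒳 be arbitrary. Suppose x_{new} ∈ 𝒳 minimizes over 𝒳 the function Φ(x) = ⟨v, x − x_{prev}⟩ + α·‖x − x_{prev}‖²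 + Σ_{n=1}^N Q^n·[g^n(x)]_+. Then [f(x_{prev}) − f(x*)] + Σ_{n=1}^N Q^n·[g^n(x_{new})]_+ ≤ 2·R·α·‖x*' − x*‖ + R²·(α' − α) + D²/(4α) + (α·‖x* − x_{prev}‖² − α'·‖x*' − x_{new}‖²). -/
open scoped RealInnerProductSpace

lemma norm_combo_sq {E : Type*} [NormedAddCommGroup E] [InnerProductSpace ℝ E]
    (a b : E) (t : ℝ) :
    ‖(1 - t) • a + t • b‖ ^ 2
      = (1 - t) * ‖a‖ ^ 2 + t * ‖b‖ ^ 2 - t * (1 - t) * ‖a - b‖ ^ 2 := by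
  have h1 : ‖(1 - t) • a + t • b‖ ^ 2 = ⟪(1 - t) • a + t • b, (1 - t) • a + t • b⟫ :=
    (real_inner_self_eq_norm_sq _).symm
  have h2 : ‖a‖ ^ 2 = ⟪a, a⟫ := (real_inner_self_eq_norm_sq _).symm
  have h3 : ‖b‖ ^ 2 = ⟪b, b⟫ := (real_inner_self_eq_norm_sq _).symm
  have h4 : ‖a - b‖ ^ 2 = ⟪a - b, a - b⟫ := (real_inner_self_eq_norm_sq _).symm
  have hc : ⟪b, a⟫ = ⟪a, b⟫ := real_inner_comm a b
  rw [h1, h2, h3, h4]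
  simp only [inner_add_left, inner_add_right, inner_sub_left, inner_sub_right,
    real_inner_smul_left, real_inner_smul_right]
  rw [hc]; ring

lemma geom_aux (R a a' A B C : ℝ) (hα : 0 < a) (hαα' : a ≤ a')
    (hA0 : 0 ≤ A) (hB0 : 0 ≤ B) (hC0 : 0 ≤ C) (hA : A ≤ R) (hB : B ≤ R)
    (htri : A ≤ C + B) :
    a' * A ^ 2 ≤ a * B ^ 2 + 2 * R * a * C + R ^ 2 * (a' - a) := by
  have e1 : (A - B) * (A + B) ≤ C * (A + B) :=
    mul_le_mul_of_nonneg_right (by linarith) (by linarith)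
  have e2 : C * (A + B) ≤ C * (2 * R) := mul_le_mul_of_nonneg_left (by linarith) hC0
  have h1 : A ^ 2 - B ^ 2 ≤ C * (2 * R) := by nlinarith
  have h2 : A ^ 2 ≤ R ^ 2 := by nlinarith
  nlinarith [mul_le_mul_of_nonneg_left h1 hα.le,
    mul_nonneg (sub_nonneg.2 hαα') (sub_nonneg.2 h2)]

lemma quad_aux (D a T : ℝ) (hα : 0 < a) (hT : 0 ≤ T) :
    D * T - a * T ^ 2 ≤ D ^ 2 / (4 * a) := by
  rw [le_div_iff₀ (by positivity : (0:ℝ) < 4 * a)]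
  nlinarith [sq_nonneg (D - 2 * a * T)]

/-- Per-slot performance guarantee of COLDQ (Lemma 3, single time-step version). -/
theorem coldq_per_slot_bound
    (p N : ℕ) (R D : ℝ) (hR : 0 < R)
    (𝒳 : Set (EuclideanSpace ℝ (Fin p)))
    (hXconv : Convex ℝ 𝒳)
    (hXbdd : ∀ x ∈ 𝒳, ∀ y ∈ 𝒳, ‖x - y‖ ≤ R)
    (f : EuclideanSpace ℝ (Fin p) → ℝ) (hfconv : ConvexOn ℝ 𝒳 f)
    (xprev : EuclideanSpace ℝ (Fin p)) (hxprev : xprev ∈ 𝒳)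
    (v : EuclideanSpace ℝ (Fin p)) (hvD : ‖v‖ ≤ D)
    (hsub : ∀ y ∈ 𝒳, f xprev + ⟪v, y - xprev⟫ ≤ f y)
    (g : Fin N → EuclideanSpace ℝ (Fin p) → ℝ)
    (hgconv : ∀ n, ConvexOn ℝ 𝒳 (g n))
    (Q : Fin N → ℝ) (hQ : ∀ n, 0 ≤ Q n)
    (α α' : ℝ) (hα : 0 < α) (hαα' : α ≤ α')
    (xs : EuclideanSpace ℝ (Fin p)) (hxs : xs ∈ 𝒳)
    (hxsfeas : ∀ n, g n xs ≤ 0)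
    (xs' : EuclideanSpace ℝ (Fin p)) (hxs' : xs' ∈ 𝒳)
    (xnew : EuclideanSpace ℝ (Fin p)) (hxnew : xnew ∈ 𝒳)
    (hmin : ∀ x ∈ 𝒳,
      ⟪v, xnew - xprev⟫ + α * ‖xnew - xprev‖ ^ 2
          + ∑ n, Q n * max (g n xnew) 0 ≤
        ⟪v, x - xprev⟫ + α * ‖x - xprev‖ ^ 2
          + ∑ n, Q n * max (g n x) 0) :
    (f xprev - f xs) + ∑ n, Q n * max (g n xnew) 0 ≤
      2 * R * α * ‖xs' - xs‖ + R ^ 2 * (α' - α) + D ^ 2 / (4 * α)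
        + (α * ‖xs - xprev‖ ^ 2 - α' * ‖xs' - xnew‖ ^ 2) := by
  classical
  set S : EuclideanSpace ℝ (Fin p) → ℝ := fun x => ∑ n, Q n * max (g n x) 0 with hSdef
  have hSxs : S xs = 0 := by
    apply Finset.sum_eq_zero
    intro n _
    have : max (g n xs) 0 = 0 := max_eq_right (hxsfeas n)
    rw [this, mul_zero]
  set Φ : EuclideanSpace ℝ (Fin p) → ℝ :=
    fun x => ⟪v, x - xprev⟫ + α * ‖x - xprev‖ ^ 2 + S x with hΦdef
  -- strong convexity key inequality for each t ∈ (0,1]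
  have hstep : ∀ t : ℝ, 0 < t → t ≤ 1 →
      Φ xnew + α * (1 - t) * ‖xs - xnew‖ ^ 2 ≤ Φ xs := by
    intro t ht ht1
    set xt : EuclideanSpace ℝ (Fin p) := (1 - t) • xnew + t • xs with hxt
    have hxtX : xt ∈ 𝒳 := hXconv hxnew hxs (by linarith) (le_of_lt ht) (by ring)
    have hmin' : Φ xnew ≤ Φ xt := hmin xt hxtX
    -- decomposition of xt - xprev
    have hdec : xt - xprev = (1 - t) • (xnew - xprev) + t • (xs - xprev) := by
      rw [hxt]; module
    have hinner : ⟪v, xt - xprev⟫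
        = (1 - t) * ⟪v, xnew - xprev⟫ + t * ⟪v, xs - xprev⟫ := by
      rw [hdec, inner_add_right, real_inner_smul_right, real_inner_smul_right]
    have hnorm : ‖xt - xprev‖ ^ 2
        = (1 - t) * ‖xnew - xprev‖ ^ 2 + t * ‖xs - xprev‖ ^ 2
          - t * (1 - t) * ‖xs - xnew‖ ^ 2 := by
      rw [hdec, norm_combo_sq]
      have : ‖xnew - xprev - (xs - xprev)‖ = ‖xs - xnew‖ := by
        rw [show xnew - xprev - (xs - xprev) = -(xs - xnew) by module, norm_neg]
      rw [this]
    have hSxt : S xt ≤ (1 - t) * S xnew + t * S xs := by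
      have hterm : ∀ n ∈ Finset.univ, Q n * max (g n xt) 0
          ≤ (1 - t) * (Q n * max (g n xnew) 0) + t * (Q n * max (g n xs) 0) := by
        intro n _
        have hg : g n xt ≤ (1 - t) * g n xnew + t * g n xs := by
          rw [hxt]
          exact (hgconv n).2 hxnew hxs (by linarith) ht.le (by ring)
        have h1 : max (g n xt) 0 ≤ (1 - t) * max (g n xnew) 0 + t * max (g n xs) 0 := by
          apply max_le
          · refine le_trans hg ?_
            have e1 : (1 - t) * g n xnew ≤ (1 - t) * max (g n xnew) 0 :=
              mul_le_mul_of_nonneg_left (le_max_left _ _) (by linarith)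
            have e2 : t * g n xs ≤ t * max (g n xs) 0 :=
              mul_le_mul_of_nonneg_left (le_max_left _ _) ht.le
            linarith
          · exact add_nonneg (mul_nonneg (by linarith) (le_max_right _ _))
              (mul_nonneg ht.le (le_max_right _ _))
        calc Q n * max (g n xt) 0
            ≤ Q n * ((1 - t) * max (g n xnew) 0 + t * max (g n xs) 0) :=
              mul_le_mul_of_nonneg_left h1 (hQ n)
          _ = (1 - t) * (Q n * max (g n xnew) 0) + t * (Q n * max (g n xs) 0) := by ring
      calc S xt ≤ ∑ n, ((1 - t) * (Q n * max (g n xnew) 0) + t * (Q n * max (g n xs) 0)) :=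
            Finset.sum_le_sum hterm
        _ = (1 - t) * S xnew + t * S xs := by
            rw [hSdef]; simp only
            rw [Finset.sum_add_distrib, ← Finset.mul_sum, ← Finset.mul_sum]
    have hΦxt : Φ xt ≤ (1 - t) * Φ xnew + t * Φ xs - α * t * (1 - t) * ‖xs - xnew‖ ^ 2 := by
      rw [hΦdef]
      simp only
      rw [hinner, hnorm]
      nlinarith [hSxt]
    have hmul : t * (Φ xnew + α * (1 - t) * ‖xs - xnew‖ ^ 2) ≤ t * Φ xs := by
      nlinarith [hmin', hΦxt]
    exact le_of_mul_le_mul_left hmul ht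
  -- pass to the limit t → 0
  have key : Φ xnew + α * ‖xs - xnew‖ ^ 2 ≤ Φ xs := by
    have hK : 0 ≤ ‖xs - xnew‖ ^ 2 := sq_nonneg _
    refine le_of_forall_pos_le_add ?_
    intro ε hε
    set t : ℝ := min 1 (ε / (α * ‖xs - xnew‖ ^ 2 + 1)) with htdef
    have hden : 0 < α * ‖xs - xnew‖ ^ 2 + 1 := by positivity
    have ht : 0 < t := lt_min one_pos (div_pos hε hden)
    have ht1 : t ≤ 1 := min_le_left _ _
    have h := hstep t ht ht1
    have htle : t ≤ ε / (α * ‖xs - xnew‖ ^ 2 + 1) := min_le_right _ _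
    have h2 : t * (α * ‖xs - xnew‖ ^ 2) ≤ ε := by
      have := mul_le_mul_of_nonneg_right htle (by positivity : (0:ℝ) ≤ α * ‖xs - xnew‖ ^ 2)
      calc t * (α * ‖xs - xnew‖ ^ 2)
          ≤ ε / (α * ‖xs - xnew‖ ^ 2 + 1) * (α * ‖xs - xnew‖ ^ 2) := this
        _ ≤ ε := by
            rw [div_mul_eq_mul_div, div_le_iff₀ hden]
            nlinarith
    nlinarith [h, h2]
  -- Cauchy–Schwarz / quadratic bound
  have hDpos : 0 ≤ D := le_trans (norm_nonneg v) hvD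
  have hCS : -⟪v, xnew - xprev⟫ ≤ D * ‖xnew - xprev‖ := by
    have h1 := abs_real_inner_le_norm v (xnew - xprev)
    have h2 : ‖v‖ * ‖xnew - xprev‖ ≤ D * ‖xnew - xprev‖ :=
      mul_le_mul_of_nonneg_right hvD (norm_nonneg _)
    have := neg_abs_le ⟪v, xnew - xprev⟫
    nlinarith [this, h1]
  have hquad : D * ‖xnew - xprev‖ - α * ‖xnew - xprev‖ ^ 2 ≤ D ^ 2 / (4 * α) :=
    quad_aux D α ‖xnew - xprev‖ hα (norm_nonneg _)
  -- geometric bound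
  have hA : ‖xs' - xnew‖ ≤ R := hXbdd xs' hxs' xnew hxnew
  have hB : ‖xs - xnew‖ ≤ R := hXbdd xs hxs xnew hxnew
  have htri : ‖xs' - xnew‖ ≤ ‖xs' - xs‖ + ‖xs - xnew‖ := by
    calc ‖xs' - xnew‖ = ‖(xs' - xs) + (xs - xnew)‖ := by rw [show (xs' - xs) + (xs - xnew) = xs' - xnew by module]
      _ ≤ ‖xs' - xs‖ + ‖xs - xnew‖ := norm_add_le _ _
  have hgeom : α' * ‖xs' - xnew‖ ^ 2
      ≤ α * ‖xs - xnew‖ ^ 2 + 2 * R * α * ‖xs' - xs‖ + R ^ 2 * (α' - α) :=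
    geom_aux R α α' _ _ _ hα hαα' (norm_nonneg _) (norm_nonneg _) (norm_nonneg _)
      hA hB (by linarith [htri])
  -- combine
  have hf := hsub xs hxs
  have keyx : S xnew ≤ ⟪v, xs - xprev⟫ + α * ‖xs - xprev‖ ^ 2
      - ⟪v, xnew - xprev⟫ - α * ‖xnew - xprev‖ ^ 2 - α * ‖xs - xnew‖ ^ 2 := by
    have := key
    rw [hΦdef] at this
    simp only at this
    rw [hSxs] at this
    linarith
  have hgoal : (f xprev - f xs) + S xnew ≤
      2 * R * α * ‖xs' - xs‖ + R ^ 2 * (α' - α) + D ^ 2 / (4 * α)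
        + (α * ‖xs - xprev‖ ^ 2 - α' * ‖xs' - xnew‖ ^ 2) := by
    linarith [hf, keyx, hCS, hquad, hgeom]
  exact hgoal
end

section
/- Consider horizon T ≥ 1 and the COLDQ setup: 𝒳 ⊆ ℝ^p convex with ‖x − y‖ ≤ R for all x, y ∈ 𝒳 (R > 0); convex loss functions f_t : 𝒳 → ℝ (1 ≤ t ≤ T) admitting subgradient maps ∇f_t : 𝒳 → ℝ^p with ‖∇f_t(x)‖ ≤ D and f_t(y) ≥ f_t(x) + ⟨∇f_t(x), y − x⟩ for all x, y ∈ 𝒳; convex constraint functions g_t^n : 𝒳 → ℝ (1 ≤ n ≤ N) with |g_t^n(x)| ≤ G for all x ∈ 𝒳; a nondecreasing sequence α_t > 0; parameters η ∈ (0,1), γ ∈ (0, G/η). The algorithm picks x_1 ∈ 𝒳 arbitrarily, sets Q_1^n = γ, and for each t ∈ {2,…,T} chooses x_t as a minimizer over 𝒳 of Φ_t(x) = ⟨∇f_{t−1}(x_{t−1}), x − x_{t−1}⟩ + α_{t−1}·‖x − x_{t−1}‖² + Σ_{n=1}^N Q_{t−1}^n·[g_{t−1}^n(x)]_+ , then updates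 Q_t^n = max{(1−η)·Q_{t−1}^n + [g_t^n(x_t)]_+ , γ}. Let x_t* ∈ 𝒳 satisfy g_t^n(x_t*) ≤ 0 for all t and n. Then the dynamic regret satisfies Σ_{t=1}^T [f_t(x_t) − f_t(x_t*)] ≤ 2·R·Σ_{t=2}^T α_{t−1}·‖x_t* − x_{t−1}*‖ + (D²/4)·Σ_{t=1}^T (1/α_t) + R²·α_T + D·R. -/
/-!
Each COLDQ step minimizes a convex function plus `α ‖· - x_{t-1}‖²`, which is `2α`-strongly
convex; comparing the minimizer `x_t` with the feasible point `x*_{t-1}`, where the penalty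
vanishes, gives the three-point inequality. Together with the subgradient inequality and
`-⟪∇, d⟫ - α ‖d‖² ≤ D² / (4α)` it bounds the regret of round `t - 1` by
`D² / (4α_{t-1}) + α_{t-1} (‖x*_{t-1} - x_{t-1}‖² - ‖x*_{t-1} - x_t‖²)`.
Replacing `x*_{t-1}` by `x*_t` in the last norm costs `2R ‖x*_t - x*_{t-1}‖`, after which the
differences telescope against the nondecreasing `α` to at most `R² α_T`; the last round
contributes at most `DR`.
-/

open scoped RealInnerProductSpace
open Finset Filter Topology

theorem convexOn_sum_mul_max_zero {E ι : Type*} [AddCommGroup E] [Module ℝ E] {s : Set E}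
    (t : Finset ι) {w : ι → ℝ} {g : ι → E → ℝ} (hs : Convex ℝ s) (hw : ∀ i ∈ t, 0 ≤ w i)
    (hg : ∀ i ∈ t, ConvexOn ℝ s (g i)) :
    ConvexOn ℝ s fun x => ∑ i ∈ t, w i * max (g i x) 0 := by
  induction t using Finset.cons_induction with
  | empty => simpa using convexOn_const (0 : ℝ) hs
  | cons i t hi ih =>
    simp only [sum_cons]
    exact (((hg i (mem_cons_self i t)).sup (convexOn_const 0 hs)).smul
      (hw i (mem_cons_self i t))).add
      (ih (fun j hj => hw j (mem_cons_of_mem hj)) fun j hj => hg j (mem_cons_of_mem hj))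

section InnerProductSpace

variable {E : Type*} [NormedAddCommGroup E] [InnerProductSpace ℝ E] {s : Set E}

theorem strongConvexOn_mul_norm_sub_sq (hs : Convex ℝ s) (a : ℝ) (x₀ : E) :
    StrongConvexOn s (2 * a) fun y => a * ‖y - x₀‖ ^ 2 := by
  refine ⟨hs, fun x _ y _ b c hb hc hbc => le_of_eq ?_⟩
  obtain rfl := eq_sub_of_add_eq' hbc
  dsimp only
  have hcomb : b • x + (1 - b) • y - x₀ = b • (x - x₀) + (1 - b) • (y - x₀) := by module
  have hdiff : x - y = (x - x₀) - (y - x₀) := by abel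
  rw [hcomb, hdiff, norm_add_sq_real, norm_sub_sq_real (x - x₀), norm_smul, norm_smul,
    real_inner_smul_left, real_inner_smul_right, Real.norm_of_nonneg hb,
    Real.norm_of_nonneg hc, smul_eq_mul, smul_eq_mul]
  ring

theorem StrongConvexOn.add_mul_norm_sub_sq_le_of_isMinOn {m : ℝ} {ψ : E → ℝ}
    (hψ : StrongConvexOn s m ψ) {z y : E} (hz : z ∈ s) (hmin : IsMinOn ψ s z) (hy : y ∈ s) :
    ψ z + m / 2 * ‖y - z‖ ^ 2 ≤ ψ y := by
  -- compare `z` with the points of the segment `[z, y]` and let them tend to `z`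
  have hsegment : ∀ l ∈ Set.Ioo (0 : ℝ) 1, ψ z + (1 - l) * (m / 2 * ‖y - z‖ ^ 2) ≤ ψ y := by
    rintro l ⟨hl₀, hl₁⟩
    have hconv := hψ.2 hz hy (sub_nonneg.2 hl₁.le) hl₀.le (sub_add_cancel 1 l)
    have hle :=
      isMinOn_iff.1 hmin _ (hψ.1 hz hy (sub_nonneg.2 hl₁.le) hl₀.le (sub_add_cancel 1 l))
    dsimp only at hconv
    rw [smul_eq_mul, smul_eq_mul, norm_sub_rev] at hconv
    refine le_of_mul_le_mul_left ?_ hl₀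
    linarith
  have hlim : Tendsto (fun l : ℝ => ψ z + (1 - l) * (m / 2 * ‖y - z‖ ^ 2)) (𝓝[>] 0)
      (𝓝 (ψ z + m / 2 * ‖y - z‖ ^ 2)) := by
    have hcont : Continuous fun l : ℝ => ψ z + (1 - l) * (m / 2 * ‖y - z‖ ^ 2) := by fun_prop
    simpa using (hcont.tendsto 0).mono_left nhdsWithin_le_nhds
  exact le_of_tendsto hlim (eventually_of_mem (Ioo_mem_nhdsGT one_pos) hsegment)

theorem ConvexOn.add_mul_norm_sub_sq_le_of_isMinOn {φ : E → ℝ} (hφ : ConvexOn ℝ s φ) {a : ℝ}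
    {x₀ z y : E} (hz : z ∈ s) (hmin : IsMinOn (fun x => φ x + a * ‖x - x₀‖ ^ 2) s z)
    (hy : y ∈ s) :
    φ z + a * ‖z - x₀‖ ^ 2 + a * ‖y - z‖ ^ 2 ≤ φ y + a * ‖y - x₀‖ ^ 2 := by
  have hψ : StrongConvexOn s (2 * a) fun x => φ x + a * ‖x - x₀‖ ^ 2 := by
    simpa [StrongConvexOn, Pi.add_def] using
      (uniformConvexOn_zero.2 hφ).add (strongConvexOn_mul_norm_sub_sq hφ.1 a x₀)
  simpa using hψ.add_mul_norm_sub_sq_le_of_isMinOn hz hmin hy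

theorem convexOn_inner_sub (hs : Convex ℝ s) (u x₀ : E) :
    ConvexOn ℝ s fun y => ⟪u, y - x₀⟫ := by
  simp_rw [inner_sub_right, sub_eq_add_neg]
  exact ((innerₛₗ ℝ u).convexOn hs).add (convexOn_const _ hs)

theorem neg_sq_div_le_inner_add_mul_norm_sq {u : E} {a D : ℝ} (ha : 0 < a) (hu : ‖u‖ ≤ D)
    (d : E) : -(D ^ 2 / (4 * a)) ≤ ⟪u, d⟫ + a * ‖d‖ ^ 2 := by
  have hcs : -(‖u‖ * ‖d‖) ≤ ⟪u, d⟫ := neg_le_of_abs_le (abs_real_inner_le_norm u d)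
  have hD : ‖u‖ * ‖d‖ ≤ D * ‖d‖ := mul_le_mul_of_nonneg_right hu (norm_nonneg d)
  have hamgm : D * ‖d‖ ≤ D ^ 2 / (4 * a) + a * ‖d‖ ^ 2 := by
    rw [div_add' _ _ _ (by positivity), le_div_iff₀ (by positivity)]
    nlinarith [sq_nonneg (2 * a * ‖d‖ - D)]
  linarith

theorem sub_le_of_isMinOn_linearization {f P : E → ℝ} (hP : ConvexOn ℝ s P) {u x x' y : E}
    {a D : ℝ} (ha : 0 < a) (hu : ‖u‖ ≤ D) (hsub : f x + ⟪u, y - x⟫ ≤ f y) (hx' : x' ∈ s)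
    (hmin : IsMinOn (fun z => ⟪u, z - x⟫ + a * ‖z - x‖ ^ 2 + P z) s x') (hy : y ∈ s)
    (hPy : P y ≤ P x') :
    f x - f y ≤ D ^ 2 / (4 * a) + a * (‖y - x‖ ^ 2 - ‖y - x'‖ ^ 2) := by
  have hthree := ((convexOn_inner_sub hP.1 u x).add hP).add_mul_norm_sub_sq_le_of_isMinOn
    (a := a) (x₀ := x) hx'
    (isMinOn_iff.2 fun z hz => by simp only [Pi.add_apply]; linarith [isMinOn_iff.1 hmin z hz]) hy
  have hyoung := neg_sq_div_le_inner_add_mul_norm_sq ha hu (x' - x)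
  simp only [Pi.add_apply] at hthree
  linarith

theorem sub_le_mul_of_le_add_inner {f : E → ℝ} {u x y : E} {D R : ℝ}
    (hsub : f x + ⟪u, y - x⟫ ≤ f y) (hu : ‖u‖ ≤ D) (hR : ‖y - x‖ ≤ R) : f x - f y ≤ D * R := by
  have hcs : -(‖u‖ * ‖y - x‖) ≤ ⟪u, y - x⟫ := neg_le_of_abs_le (abs_real_inner_le_norm _ _)
  nlinarith [mul_le_mul hu hR (norm_nonneg _) ((norm_nonneg u).trans hu)]

end InnerProductSpace

theorem sq_norm_sub_sub_sq_norm_sub_le {F : Type*} [SeminormedAddCommGroup F] {a b c : F}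
    {R : ℝ} (ha : ‖a - c‖ ≤ R) (hb : ‖b - c‖ ≤ R) :
    ‖a - c‖ ^ 2 - ‖b - c‖ ^ 2 ≤ 2 * R * ‖a - b‖ := by
  have h : ‖a - c‖ - ‖b - c‖ ≤ ‖a - b‖ := by
    simpa using norm_sub_norm_le (a - c) (b - c)
  have hsum : 0 ≤ ‖a - c‖ + ‖b - c‖ := by positivity
  nlinarith [mul_le_mul_of_nonneg_right h hsum,
    mul_le_mul_of_nonneg_left (add_le_add ha hb) (norm_nonneg (a - b))]

theorem sum_Ico_mul_sub_succ_le {α b : ℕ → ℝ} {m n : ℕ} {B : ℝ} (hα : Monotone α)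
    (hα₀ : 0 ≤ α m) (hmn : m ≤ n) (hb : ∀ t ∈ Icc m n, b t ≤ B) :
    ∑ t ∈ Ico m n, α t * (b t - b (t + 1)) ≤ α n * (B - b n) := by
  induction n, hmn using Nat.le_induction with
  | base => simpa using mul_nonneg hα₀ (sub_nonneg.2 (hb m (by simp)))
  | succ n hmn ih =>
    rw [sum_Ico_succ_top hmn]
    have hIH := ih fun t ht => hb t (Icc_subset_Icc_right n.le_succ ht)
    have hB := sub_nonneg.2 (hb (n + 1) (mem_Icc.2 ⟨by omega, le_rfl⟩))
    nlinarith [mul_le_mul_of_nonneg_right (hα n.le_succ) hB]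

theorem sum_Icc_le_of_step_le {r α b c δ : ℕ → ℝ} {T : ℕ} {B C K L : ℝ} (hT : 1 ≤ T)
    (hα : Monotone α) (hα₀ : ∀ t, 0 < α t) (hb : ∀ t ∈ Icc 1 T, b t ≤ B) (hbT : 0 ≤ b T)
    (hC : 0 ≤ C)
    (hstep : ∀ t ∈ Icc 2 T, r (t - 1) ≤ C / α (t - 1) + α (t - 1) * (b (t - 1) - c t))
    (hdrift : ∀ t ∈ Icc 2 T, b t - c t ≤ K * δ t) (hlast : r T ≤ L) :
    ∑ t ∈ Icc 1 T, r t ≤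
      K * ∑ t ∈ Icc 2 T, α (t - 1) * δ t + C * ∑ t ∈ Icc 1 T, 1 / α t + B * α T + L := by
  have hshift : ∀ h : ℕ → ℝ, ∑ t ∈ Icc 2 T, h t = ∑ s ∈ Ico 1 T, h (s + 1) := fun h => by
    rw [← Ico_add_one_right_eq_Icc, sum_Ico_add']
  have hround : ∀ s ∈ Ico 1 T,
      r s ≤ C * (1 / α s) + α s * (b s - b (s + 1)) + K * (α s * δ (s + 1)) := fun s hs => by
    have hs' : s + 1 ∈ Icc 2 T := by simp only [mem_Ico, mem_Icc] at hs ⊢; omega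
    have hdrift' := mul_le_mul_of_nonneg_left (hdrift _ hs') (hα₀ s).le
    have hstep' := hstep _ hs'
    rw [Nat.add_sub_cancel] at hstep'
    rw [mul_one_div]
    linarith
  have hrounds := sum_le_sum hround
  rw [sum_add_distrib, sum_add_distrib, ← mul_sum, ← mul_sum] at hrounds
  have htelescope := sum_Ico_mul_sub_succ_le hα (hα₀ 1).le hT hb
  have hinv : ∑ s ∈ Ico 1 T, 1 / α s ≤ ∑ t ∈ Icc 1 T, 1 / α t :=
    sum_le_sum_of_subset_of_nonneg Ico_subset_Icc_self fun t _ _ => (one_div_pos.2 (hα₀ t)).le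
  have hsplit : ∑ t ∈ Icc 1 T, r t = ∑ s ∈ Ico 1 T, r s + r T := by
    rw [← Ico_add_one_right_eq_Icc, sum_Ico_succ_top hT]
  rw [hsplit, hshift fun t => α (t - 1) * δ t]
  simp only [Nat.add_sub_cancel]
  nlinarith [mul_le_mul_of_nonneg_left hinv hC, mul_nonneg (hα₀ T).le hbT]

theorem coldq_dynamic_regret_general
    (p N T : ℕ) (hT : 1 ≤ T) (R D η γ : ℝ)
    (𝒳 : Set (EuclideanSpace ℝ (Fin p)))
    (hXconv : Convex ℝ 𝒳)
    (hXbdd : ∀ x ∈ 𝒳, ∀ y ∈ 𝒳, ‖x - y‖ ≤ R)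
    (f : ℕ → EuclideanSpace ℝ (Fin p) → ℝ)
    (gradf : ℕ → EuclideanSpace ℝ (Fin p) → EuclideanSpace ℝ (Fin p))
    (hgradD : ∀ t, ∀ x ∈ 𝒳, ‖gradf t x‖ ≤ D)
    (hsub : ∀ t, ∀ x ∈ 𝒳, ∀ y ∈ 𝒳, f t x + ⟪gradf t x, y - x⟫ ≤ f t y)
    (g : ℕ → Fin N → EuclideanSpace ℝ (Fin p) → ℝ)
    (hgconv : ∀ t n, ConvexOn ℝ 𝒳 (g t n))
    (α : ℕ → ℝ) (hαpos : ∀ t, 0 < α t) (hαmono : Monotone α)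
    (hγ0 : 0 < γ)
    (x : ℕ → EuclideanSpace ℝ (Fin p)) (hx1 : x 1 ∈ 𝒳)
    (Q : ℕ → Fin N → ℝ) (hQ1 : ∀ n, Q 1 n = γ)
    (hxX : ∀ t, 2 ≤ t → t ≤ T → x t ∈ 𝒳)
    (hxmin : ∀ t, 2 ≤ t → t ≤ T → ∀ y ∈ 𝒳,
      ⟪gradf (t - 1) (x (t - 1)), x t - x (t - 1)⟫
          + α (t - 1) * ‖x t - x (t - 1)‖ ^ 2
          + ∑ n, Q (t - 1) n * max (g (t - 1) n (x t)) 0 ≤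
        ⟪gradf (t - 1) (x (t - 1)), y - x (t - 1)⟫
          + α (t - 1) * ‖y - x (t - 1)‖ ^ 2
          + ∑ n, Q (t - 1) n * max (g (t - 1) n y) 0)
    (hQupd : ∀ t, 2 ≤ t → t ≤ T → ∀ n,
      Q t n = max ((1 - η) * Q (t - 1) n + max (g t n (x t)) 0) γ)
    (xstar : ℕ → EuclideanSpace ℝ (Fin p))
    (hxstarX : ∀ t, 1 ≤ t → t ≤ T → xstar t ∈ 𝒳)
    (hxstarfeas : ∀ t, 1 ≤ t → t ≤ T → ∀ n, g t n (xstar t) ≤ 0) :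
    ∑ t ∈ Finset.Icc 1 T, (f t (x t) - f t (xstar t)) ≤
      2 * R * ∑ t ∈ Finset.Icc 2 T, α (t - 1) * ‖xstar t - xstar (t - 1)‖
        + (D ^ 2 / 4) * ∑ t ∈ Finset.Icc 1 T, (1 / α t)
        + R ^ 2 * α T + D * R := by
  have hxmem : ∀ t, 1 ≤ t → t ≤ T → x t ∈ 𝒳 := fun t h₁ hT' => by
    rcases h₁.eq_or_lt with rfl | h₂
    exacts [hx1, hxX t h₂ hT']
  have hQ₀ : ∀ t, 1 ≤ t → t ≤ T → ∀ n, 0 ≤ Q t n := fun t h₁ hT' n => hγ0.le.trans <| by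
    rcases h₁.eq_or_lt with rfl | h₂
    exacts [(hQ1 n).ge, (hQupd t h₂ hT' n).ge.trans' (le_max_right _ _)]
  have hxT := hxmem T hT le_rfl
  have hxstarT := hxstarX T hT le_rfl
  refine sum_Icc_le_of_step_le hT hαmono hαpos (b := fun t => ‖xstar t - x t‖ ^ 2)
    (c := fun t => ‖xstar (t - 1) - x t‖ ^ 2) ?_ (sq_nonneg _) (by positivity) ?_ ?_
    (sub_le_mul_of_le_add_inner (hsub T _ hxT _ hxstarT) (hgradD T _ hxT) (hXbdd _ hxstarT _ hxT))
  · intro t ht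
    obtain ⟨h₁, hT'⟩ := mem_Icc.1 ht
    exact pow_le_pow_left₀ (norm_nonneg _) (hXbdd _ (hxstarX t h₁ hT') _ (hxmem t h₁ hT')) 2
  · intro t ht
    obtain ⟨h₂, hT'⟩ := mem_Icc.1 ht
    have hxstar' := hxstarX (t - 1) (by omega) (by omega)
    have hpenalty : ∀ n, max (g (t - 1) n (xstar (t - 1))) 0 ≤ max (g (t - 1) n (x t)) 0 :=
      fun n => (max_eq_right (hxstarfeas _ (by omega) (by omega) n)).trans_le (le_max_right _ _)
    rw [div_div]
    exact sub_le_of_isMinOn_linearization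
      (convexOn_sum_mul_max_zero univ hXconv (fun n _ => hQ₀ _ (by omega) (by omega) n)
        fun n _ => hgconv _ n)
      (hαpos _) (hgradD _ _ (hxmem _ (by omega) (by omega)))
      (hsub _ _ (hxmem _ (by omega) (by omega)) _ hxstar') (hxX t h₂ hT')
      (isMinOn_iff.2 (hxmin t h₂ hT')) hxstar'
      (sum_le_sum fun n _ => mul_le_mul_of_nonneg_left (hpenalty n) (hQ₀ _ (by omega) (by omega) n))
  · intro t ht
    obtain ⟨h₂, hT'⟩ := mem_Icc.1 ht
    exact sq_norm_sub_sub_sq_norm_sub_le (hXbdd _ (hxstarX t (by omega) hT') _ (hxX t h₂ hT'))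
      (hXbdd _ (hxstarX (t - 1) (by omega) (by omega)) _ (hxX t h₂ hT'))

/-- Dynamic regret bound of COLDQ (Theorem 1). -/
theorem coldq_dynamic_regret
    (p N T : ℕ) (hT : 1 ≤ T) (R D G η γ : ℝ)
    (hR : 0 < R)
    (𝒳 : Set (EuclideanSpace ℝ (Fin p)))
    (hXconv : Convex ℝ 𝒳)
    (hXbdd : ∀ x ∈ 𝒳, ∀ y ∈ 𝒳, ‖x - y‖ ≤ R)
    (f : ℕ → EuclideanSpace ℝ (Fin p) → ℝ)
    (hfconv : ∀ t, ConvexOn ℝ 𝒳 (f t))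
    (gradf : ℕ → EuclideanSpace ℝ (Fin p) → EuclideanSpace ℝ (Fin p))
    (hgradD : ∀ t, ∀ x ∈ 𝒳, ‖gradf t x‖ ≤ D)
    (hsub : ∀ t, ∀ x ∈ 𝒳, ∀ y ∈ 𝒳, f t x + ⟪gradf t x, y - x⟫ ≤ f t y)
    (g : ℕ → Fin N → EuclideanSpace ℝ (Fin p) → ℝ)
    (hgconv : ∀ t n, ConvexOn ℝ 𝒳 (g t n))
    (hgG : ∀ t n, ∀ x ∈ 𝒳, |g t n x| ≤ G)
    (α : ℕ → ℝ) (hαpos : ∀ t, 0 < α t) (hαmono : Monotone α)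
    (hη0 : 0 < η) (hη1 : η < 1) (hγ0 : 0 < γ) (hγG : γ < G / η)
    (x : ℕ → EuclideanSpace ℝ (Fin p)) (hx1 : x 1 ∈ 𝒳)
    (Q : ℕ → Fin N → ℝ) (hQ1 : ∀ n, Q 1 n = γ)
    (hxX : ∀ t, 2 ≤ t → t ≤ T → x t ∈ 𝒳)
    (hxmin : ∀ t, 2 ≤ t → t ≤ T → ∀ y ∈ 𝒳,
      ⟪gradf (t - 1) (x (t - 1)), x t - x (t - 1)⟫
          + α (t - 1) * ‖x t - x (t - 1)‖ ^ 2
          + ∑ n, Q (t - 1) n * max (g (t - 1) n (x t)) 0 ≤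
        ⟪gradf (t - 1) (x (t - 1)), y - x (t - 1)⟫
          + α (t - 1) * ‖y - x (t - 1)‖ ^ 2
          + ∑ n, Q (t - 1) n * max (g (t - 1) n y) 0)
    (hQupd : ∀ t, 2 ≤ t → t ≤ T → ∀ n,
      Q t n = max ((1 - η) * Q (t - 1) n + max (g t n (x t)) 0) γ)
    (xstar : ℕ → EuclideanSpace ℝ (Fin p))
    (hxstarX : ∀ t, 1 ≤ t → t ≤ T → xstar t ∈ 𝒳)
    (hxstarfeas : ∀ t, 1 ≤ t → t ≤ T → ∀ n, g t n (xstar t) ≤ 0) :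
    ∑ t ∈ Finset.Icc 1 T, (f t (x t) - f t (xstar t)) ≤
      2 * R * ∑ t ∈ Finset.Icc 2 T, α (t - 1) * ‖xstar t - xstar (t - 1)‖
        + (D ^ 2 / 4) * ∑ t ∈ Finset.Icc 1 T, (1 / α t)
        + R ^ 2 * α T + D * R :=
  coldq_dynamic_regret_general p N T hT R D η γ 𝒳 hXconv hXbdd f gradf hgradD hsub g hgconv α hαpos
    hαmono hγ0 x hx1 Q hQ1 hxX hxmin hQupd xstar hxstarX hxstarfeas
end

section
/- Consider horizon T ≥ 1 and the COLDQ setup: 𝒳 ⊆ ℝ^p convex with ‖x − y‖ ≤ R for all x, y ∈ 𝒳 (R > 0); convex loss functions f_t : 𝒳 → ℝ admitting subgradient maps ∇f_t with ‖∇f_t(x)‖ ≤ D and f_t(y) ≥ f_t(x) + ⟨∇f_t(x), y − x⟩ for all x, y ∈ 𝒳; convex constraint functions g_t^n : 𝒳 → ℝ (1 ≤ n ≤ N) with |g_t^n(x)| ≤ G on 𝒳; a nondecreasing sequence α_t > 0; parameters η ∈ (0,1), γ ∈ (0, G/η); x_1 ∈ 𝒳 arbitrary, Q_1^n = γ, and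 for t ∈ {2,…,T}: x_t minimizes over 𝒳 the function Φ_t(x) = ⟨∇f_{t−1}(x_{t−1}), x − x_{t−1}⟩ + α_{t−1}·‖x − x_{t−1}‖² + Σ_{n=1}^N Q_{t−1}^n·[g_{t−1}^n(x)]_+ and Q_t^n = max{(1−η)·Q_{t−1}^n + [g_t^n(x_t)]_+ , γ}. Let x_t* ∈ 𝒳 satisfy g_t^n(x_t*) ≤ 0 for all t, n, and let B_t ≥ 0 (2 ≤ t ≤ T) satisfy (Σ_{n=1}^N (g_t^n(x) − g_{t−1}^n(x))²)^{1/2} ≤ B_t for all x ∈ 𝒳. Then the hard constraint violation satisfies Σ_{n=1}^N Σ_{t=1}^T [g_t^n(x_t)]_+ ≤ (G·√N/(η·γ))·Σ_{t=2}^T B_t + (2R/γ)·Σ_{t=2}^T α_{t−1}·‖x_t* − x_{t−1}*‖ + (D²/(4γ))·Σ_{t=1}^T (1/α_t) + (D·R + 2·N·G²)·T/γ + R²·α_T/γ + N·G. -/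
/-!
Round `t` of COLDQ minimises a proximal objective: the linearised loss plus `α‖· - x‖²` plus the
penalty `∑ Q [g]₊` with weights `Q ≥ γ`. Adding `α‖· - c‖²` to a convex function makes it
`2α`-strongly convex, so comparing the minimiser `x_t` with the feasible point `x*_{t-1}`
(three-point inequality) bounds `γ ∑ [g_{t-1}(x_t)]₊` by `D R + D²/(4α_{t-1})` plus the decrease
of `α‖x* - x‖²`. Passing from `g_{t-1}` to `g_t` costs `√N B_t` (Cauchy–Schwarz), and moving the
comparator to `x*_t` while `α` grows costs `2Rα_{t-1}‖x*_t - x*_{t-1}‖` and `(α_t - α_{t-1})R²`;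
with the potential `α_t (R² - ‖x*_t - x_t‖²)` the rounds telescope. The first round contributes at
most `N G`, and `γ < G / η` lets `G √N / (η γ)` dominate `√N`.
-/

open scoped RealInnerProductSpace
open Finset Filter Topology

section Minimizer

variable {E : Type*} [NormedAddCommGroup E] {s : Set E} {f : E → ℝ} {x₀ y : E}

theorem UniformConvexOn.add_le_of_isMinOn [NormedSpace ℝ E] {φ : ℝ → ℝ}
    (hf : UniformConvexOn s φ f) (hmin : IsMinOn f s x₀) (hx₀ : x₀ ∈ s) (hy : y ∈ s) :
    f x₀ + φ ‖x₀ - y‖ ≤ f y := by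
  have hseg : ∀ a ∈ Set.Ioo (0 : ℝ) 1, f x₀ + (1 - a) * φ ‖x₀ - y‖ ≤ f y := by
    rintro a ⟨ha₀, ha₁⟩
    have hab : 1 - a + a = 1 := sub_add_cancel 1 a
    have hle := isMinOn_iff.1 hmin _ (hf.1 hx₀ hy (sub_nonneg.2 ha₁.le) ha₀.le hab)
    have hconv := hf.2 hx₀ hy (sub_nonneg.2 ha₁.le) ha₀.le hab
    rw [smul_eq_mul, smul_eq_mul] at hconv
    have : a * (f x₀ + (1 - a) * φ ‖x₀ - y‖ - f y) ≤ 0 := by linarith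
    linarith [nonpos_of_mul_nonpos_right this ha₀]
  have hlim : Tendsto (fun a : ℝ ↦ f x₀ + (1 - a) * φ ‖x₀ - y‖) (𝓝[>] 0)
      (𝓝 (f x₀ + φ ‖x₀ - y‖)) := by
    have hcont : Continuous fun a : ℝ ↦ f x₀ + (1 - a) * φ ‖x₀ - y‖ := by fun_prop
    simpa using (hcont.tendsto 0).mono_left nhdsWithin_le_nhds
  exact le_of_tendsto hlim (eventually_of_mem (Ioo_mem_nhdsGT one_pos) hseg)

variable [InnerProductSpace ℝ E]

theorem ConvexOn.strongConvexOn_add_mul_sq_norm_sub (hf : ConvexOn ℝ s f) (α : ℝ) (c : E) :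
    StrongConvexOn s (2 * α) fun y ↦ f y + α * ‖y - c‖ ^ 2 := by
  rw [strongConvexOn_iff_convex]
  have hsplit : (fun y ↦ f y + α * ‖y - c‖ ^ 2 - 2 * α / 2 * ‖y‖ ^ 2)
      = fun y ↦ f y + ((-(2 * α) • innerₗ E c) y + α * ‖c‖ ^ 2) := by
    funext y
    rw [LinearMap.smul_apply, innerₗ_apply_apply, smul_eq_mul, norm_sub_sq_real, real_inner_comm]
    ring
  rw [hsplit]
  exact hf.add (((-(2 * α) • innerₗ E c).convexOn hf.1).add_const _)

theorem ConvexOn.add_mul_sq_norm_sub_le_of_isMinOn (hf : ConvexOn ℝ s f) {α : ℝ} {c : E}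
    (hmin : IsMinOn (fun y ↦ f y + α * ‖y - c‖ ^ 2) s x₀) (hx₀ : x₀ ∈ s) (hy : y ∈ s) :
    f x₀ + α * ‖x₀ - c‖ ^ 2 + α * ‖y - x₀‖ ^ 2 ≤ f y + α * ‖y - c‖ ^ 2 := by
  have h := (hf.strongConvexOn_add_mul_sq_norm_sub α c).add_le_of_isMinOn hmin hx₀ hy
  rw [norm_sub_rev x₀ y] at h
  linarith

end Minimizer

theorem convexOn_sum {𝕜 E β ι : Type*} [Semiring 𝕜] [PartialOrder 𝕜] [AddCommMonoid E]
    [AddCommMonoid β] [PartialOrder β] [IsOrderedAddMonoid β] [SMul 𝕜 E] [Module 𝕜 β]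
    {s : Set E} (hs : Convex 𝕜 s) (t : Finset ι) {f : ι → E → β}
    (hf : ∀ i ∈ t, ConvexOn 𝕜 s (f i)) : ConvexOn 𝕜 s fun x ↦ ∑ i ∈ t, f i x := by
  classical
  induction t using Finset.induction_on with
  | empty => simpa using convexOn_const (0 : β) hs
  | insert i t hi ih =>
    simp only [sum_insert hi]
    exact (hf i (mem_insert_self i t)).add (ih fun j hj ↦ hf j (mem_insert_of_mem hj))

theorem mul_le_mul_sq_add_sq_div {a b α : ℝ} (hα : 0 < α) :
    a * b ≤ α * b ^ 2 + a ^ 2 / (4 * α) := by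
  have h : α * b ^ 2 + a ^ 2 / (4 * α) - a * b = (2 * α * b - a) ^ 2 / (4 * α) := by
    field_simp
    ring
  rw [← sub_nonneg, h]
  positivity

theorem sum_max_zero_le_add_sqrt_card_mul {ι : Type*} [Fintype ι] (a b : ι → ℝ) :
    ∑ i, max (a i) 0 ≤ ∑ i, max (b i) 0 + √(Fintype.card ι) * √(∑ i, (a i - b i) ^ 2) := by
  have hterm : ∀ i, max (a i) 0 ≤ max (b i) 0 + |a i - b i| := fun i ↦
    sub_le_iff_le_add'.1 ((le_abs_self _).trans (abs_max_sub_max_le_abs _ _ _))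
  have hcs : ∑ i, |a i - b i| ≤ √(Fintype.card ι) * √(∑ i, (a i - b i) ^ 2) := by
    rw [← Real.sqrt_mul (Nat.cast_nonneg _), Real.le_sqrt (by positivity) (by positivity)]
    simpa [sq_abs] using sq_sum_le_card_mul_sum_sq (s := univ) (f := fun i ↦ |a i - b i|)
  calc ∑ i, max (a i) 0 ≤ ∑ i, (max (b i) 0 + |a i - b i|) := sum_le_sum fun i _ ↦ hterm i
    _ ≤ _ := by rw [sum_add_distrib]; gcongr

theorem norm_sub_sq_le_norm_sub_sq_add {F : Type*} [SeminormedAddCommGroup F] {a b x : F} {R : ℝ}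
    (ha : ‖a - x‖ ≤ R) (hb : ‖b - x‖ ≤ R) : ‖a - x‖ ^ 2 ≤ ‖b - x‖ ^ 2 + 2 * R * ‖a - b‖ := by
  have hdiff : ‖a - x‖ - ‖b - x‖ ≤ ‖a - b‖ := by
    simpa using norm_sub_norm_le (a - x) (b - x)
  nlinarith [mul_le_mul_of_nonneg_right hdiff
      (add_nonneg (norm_nonneg (a - x)) (norm_nonneg (b - x))),
    mul_le_mul_of_nonneg_left (add_le_add ha hb) (norm_nonneg (a - b))]

section Round

variable {E ι : Type*} [NormedAddCommGroup E] [InnerProductSpace ℝ E] [Fintype ι] {s : Set E}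
  {k : ι → E → ℝ} {q : ι → ℝ} {γ α : ℝ} {v c x z : E}

theorem violation_add_le_of_isMinOn (hs : Convex ℝ s) (hk : ∀ n, ConvexOn ℝ s (k n))
    (hγ : 0 ≤ γ) (hq : ∀ n, γ ≤ q n) (hα : 0 < α)
    (hmin : IsMinOn (fun y ↦ ⟪v, y - c⟫ + α * ‖y - c‖ ^ 2 + ∑ n, q n * max (k n y) 0) s x)
    (hx : x ∈ s) (hz : z ∈ s) (hfeas : ∀ n, k n z ≤ 0) :
    γ * ∑ n, max (k n x) 0 + α * ‖z - x‖ ^ 2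
      ≤ ⟪v, z - c⟫ + ‖v‖ ^ 2 / (4 * α) + α * ‖z - c‖ ^ 2 := by
  set φ : E → ℝ := fun y ↦ ⟪v, y - c⟫ + ∑ n, q n * max (k n y) 0 with hφ
  have hφconv : ConvexOn ℝ s φ := by
    have hlin : (fun y ↦ ⟪v, y - c⟫) = ⇑(innerₗ E v) + fun _ : E ↦ -⟪v, c⟫ := by
      funext y
      rw [Pi.add_apply, innerₗ_apply_apply, inner_sub_right, sub_eq_add_neg]
    exact (hlin ▸ ((innerₗ E v).convexOn hs).add_const _).add <| convexOn_sum hs univ fun n _ ↦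
      ((hk n).sup (convexOn_const 0 hs)).smul (hγ.trans (hq n))
  have hmin' : IsMinOn (fun y ↦ φ y + α * ‖y - c‖ ^ 2) s x := isMinOn_iff.2 fun y hy ↦ by
    have := isMinOn_iff.1 hmin y hy
    simp only [hφ] at this ⊢
    linarith
  have hthree := hφconv.add_mul_sq_norm_sub_le_of_isMinOn hmin' hx hz
  have hφz : φ z = ⟪v, z - c⟫ := by simp [hφ, max_eq_right (hfeas _)]
  have hφx : ⟪v, x - c⟫ + γ * ∑ n, max (k n x) 0 ≤ φ x := by
    simp only [hφ, mul_sum]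
    gcongr with n
    exact hq n
  have hyoung : -⟪v, x - c⟫ ≤ α * ‖x - c‖ ^ 2 + ‖v‖ ^ 2 / (4 * α) := by
    have := real_inner_le_norm (-v) (x - c)
    rw [inner_neg_left, norm_neg] at this
    linarith [mul_le_mul_sq_add_sq_div (a := ‖v‖) (b := ‖x - c‖) hα]
  linarith

theorem next_violation_le_of_isMinOn {k' : ι → E → ℝ} {R D α' B : ℝ} {z' : E} (hs : Convex ℝ s)
    (hdiam : ∀ x ∈ s, ∀ y ∈ s, ‖x - y‖ ≤ R) (hk : ∀ n, ConvexOn ℝ s (k n))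
    (hγ : 0 ≤ γ) (hq : ∀ n, γ ≤ q n) (hα : 0 < α) (hαα' : α ≤ α') (hv : ‖v‖ ≤ D) (hc : c ∈ s)
    (hmin : IsMinOn (fun y ↦ ⟪v, y - c⟫ + α * ‖y - c‖ ^ 2 + ∑ n, q n * max (k n y) 0) s x)
    (hx : x ∈ s) (hz : z ∈ s) (hz' : z' ∈ s) (hfeas : ∀ n, k n z ≤ 0)
    (hB : √(∑ n, (k' n x - k n x) ^ 2) ≤ B) :
    γ * ∑ n, max (k' n x) 0
      ≤ D * R + (D ^ 2 / (4 * α) + 2 * R * (α * ‖z' - z‖) + γ * (√(Fintype.card ι) * B))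
        + (α' * (R ^ 2 - ‖z' - x‖ ^ 2) - α * (R ^ 2 - ‖z - c‖ ^ 2)) := by
  have hviol := violation_add_le_of_isMinOn hs hk hγ hq hα hmin hx hz hfeas
  have hshift := sum_max_zero_le_add_sqrt_card_mul (fun n ↦ k' n x) (fun n ↦ k n x)
  have hdrift := norm_sub_sq_le_norm_sub_sq_add (hdiam z' hz' x hx) (hdiam z hz x hx)
  have hinner : ⟪v, z - c⟫ ≤ D * R := (real_inner_le_norm _ _).trans
    (mul_le_mul hv (hdiam z hz c hc) (norm_nonneg _) ((norm_nonneg _).trans hv))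
  have hv2 : ‖v‖ ^ 2 / (4 * α) ≤ D ^ 2 / (4 * α) := by gcongr
  have hR : ‖z' - x‖ ^ 2 ≤ R ^ 2 := by gcongr; exact hdiam z' hz' x hx
  linarith [mul_le_mul_of_nonneg_left hshift hγ, mul_le_mul_of_nonneg_left hdrift hα.le,
    mul_le_mul_of_nonneg_right hαα' (sub_nonneg.2 hR),
    mul_le_mul_of_nonneg_left hB (mul_nonneg hγ (Real.sqrt_nonneg (Fintype.card ι)))]

end Round

theorem sum_Ico_le_of_le_add_sub {T : ℕ} (hT : 1 ≤ T) {u a Ψ : ℕ → ℝ} {C M : ℝ} (hC : 0 ≤ C)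
    (hΨ₁ : 0 ≤ Ψ 1) (hΨT : Ψ T ≤ M) (h : ∀ t ∈ Ico 1 T, u t ≤ C + a t + (Ψ (t + 1) - Ψ t)) :
    ∑ t ∈ Ico 1 T, u t ≤ T * C + ∑ t ∈ Ico 1 T, a t + M := by
  have hsum := sum_le_sum h
  rw [sum_add_distrib, sum_add_distrib, sum_const, Nat.card_Ico, sum_Ico_sub Ψ hT,
    nsmul_eq_mul] at hsum
  have hcount : ((T - 1 : ℕ) : ℝ) * C ≤ T * C :=
    mul_le_mul_of_nonneg_right (by exact_mod_cast T.sub_le 1) hC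
  linarith

theorem sum_Icc_two_eq_sum_Ico_one {M : Type*} [AddCommMonoid M] (h : ℕ → M) (T : ℕ) :
    ∑ t ∈ Icc 2 T, h t = ∑ t ∈ Ico 1 T, h (t + 1) := by
  rw [sum_Ico_add', ← Ico_add_one_right_eq_Icc]

theorem sum_Icc_one_eq_add_sum_Ico_one {M : Type*} [AddCommMonoid M] (h : ℕ → M) {T : ℕ}
    (hT : 1 ≤ T) : ∑ t ∈ Icc 1 T, h t = h 1 + ∑ t ∈ Ico 1 T, h (t + 1) := by
  rw [← add_sum_Ioc_eq_sum_Icc hT, ← sum_Icc_two_eq_sum_Ico_one]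
  -- on ℕ, `Ioc 1 T` and `Icc 2 T` are the same finset by definition
  rfl

theorem coldq_hard_violation_general
    (p N T : ℕ) (hT : 1 ≤ T) (R D G η γ : ℝ)
    (hR : 0 < R)
    (𝒳 : Set (EuclideanSpace ℝ (Fin p)))
    (hXconv : Convex ℝ 𝒳)
    (hXbdd : ∀ x ∈ 𝒳, ∀ y ∈ 𝒳, ‖x - y‖ ≤ R)
    (gradf : ℕ → EuclideanSpace ℝ (Fin p) → EuclideanSpace ℝ (Fin p))
    (hgradD : ∀ t, ∀ x ∈ 𝒳, ‖gradf t x‖ ≤ D)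
    (g : ℕ → Fin N → EuclideanSpace ℝ (Fin p) → ℝ)
    (hgconv : ∀ t n, ConvexOn ℝ 𝒳 (g t n))
    (hgG : ∀ t n, ∀ x ∈ 𝒳, |g t n x| ≤ G)
    (α : ℕ → ℝ) (hαpos : ∀ t, 0 < α t) (hαmono : Monotone α)
    (hγ0 : 0 < γ) (hγG : γ < G / η)
    (x : ℕ → EuclideanSpace ℝ (Fin p)) (hx1 : x 1 ∈ 𝒳)
    (Q : ℕ → Fin N → ℝ) (hQ1 : ∀ n, Q 1 n = γ)
    (hxX : ∀ t, 2 ≤ t → t ≤ T → x t ∈ 𝒳)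
    (hxmin : ∀ t, 2 ≤ t → t ≤ T → ∀ y ∈ 𝒳,
      ⟪gradf (t - 1) (x (t - 1)), x t - x (t - 1)⟫
          + α (t - 1) * ‖x t - x (t - 1)‖ ^ 2
          + ∑ n, Q (t - 1) n * max (g (t - 1) n (x t)) 0 ≤
        ⟪gradf (t - 1) (x (t - 1)), y - x (t - 1)⟫
          + α (t - 1) * ‖y - x (t - 1)‖ ^ 2
          + ∑ n, Q (t - 1) n * max (g (t - 1) n y) 0)
    (hQupd : ∀ t, 2 ≤ t → t ≤ T → ∀ n,
      Q t n = max ((1 - η) * Q (t - 1) n + max (g t n (x t)) 0) γ)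
    (xstar : ℕ → EuclideanSpace ℝ (Fin p))
    (hxstarX : ∀ t, 1 ≤ t → t ≤ T → xstar t ∈ 𝒳)
    (hxstarfeas : ∀ t, 1 ≤ t → t ≤ T → ∀ n, g t n (xstar t) ≤ 0)
    (B : ℕ → ℝ) (hB0 : ∀ t, 2 ≤ t → t ≤ T → 0 ≤ B t)
    (hB : ∀ t, 2 ≤ t → t ≤ T → ∀ x ∈ 𝒳,
      Real.sqrt (∑ n, (g t n x - g (t - 1) n x) ^ 2) ≤ B t) :
    ∑ n : Fin N, ∑ t ∈ Finset.Icc 1 T, max (g t n (x t)) 0 ≤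
      (G * Real.sqrt N / (η * γ)) * ∑ t ∈ Finset.Icc 2 T, B t
        + (2 * R / γ) * ∑ t ∈ Finset.Icc 2 T, α (t - 1) * ‖xstar t - xstar (t - 1)‖
        + (D ^ 2 / (4 * γ)) * ∑ t ∈ Finset.Icc 1 T, (1 / α t)
        + (D * R + 2 * N * G ^ 2) * T / γ
        + R ^ 2 * α T / γ + N * G := by
  have hD : 0 ≤ D := (norm_nonneg _).trans (hgradD 1 _ hx1)
  have hx : ∀ t, 1 ≤ t → t ≤ T → x t ∈ 𝒳 := fun t h1 htT ↦ by
    rcases h1.eq_or_lt with rfl | h2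
    exacts [hx1, hxX t h2 htT]
  have hQ : ∀ t, 1 ≤ t → t ≤ T → ∀ n, γ ≤ Q t n := fun t h1 htT n ↦ by
    rcases h1.eq_or_lt with rfl | h2
    exacts [(hQ1 n).ge, hQupd t h2 htT n ▸ le_max_right _ _]
  set Ψ : ℕ → ℝ := fun t ↦ α t * (R ^ 2 - ‖xstar t - x t‖ ^ 2)
  have hround : ∀ t ∈ Ico 1 T, γ * ∑ n, max (g (t + 1) n (x (t + 1))) 0
      ≤ D * R + (D ^ 2 / (4 * α t) + 2 * R * (α t * ‖xstar (t + 1) - xstar t‖)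
        + γ * (√N * B (t + 1))) + (Ψ (t + 1) - Ψ t) := by
    intro t ht
    obtain ⟨h1, htT⟩ := mem_Ico.1 ht
    have h2 : 2 ≤ t + 1 := by omega
    have hmin := hxmin (t + 1) h2 htT
    have hBt := hB (t + 1) h2 htT _ (hxX _ h2 htT)
    simp only [Nat.add_sub_cancel] at hmin hBt
    simpa using next_violation_le_of_isMinOn hXconv hXbdd (hgconv t) hγ0.le (hQ t h1 htT.le)
      (hαpos t) (hαmono t.le_succ) (hgradD t _ (hx t h1 htT.le)) (hx t h1 htT.le)
      (isMinOn_iff.2 hmin) (hxX _ h2 htT) (hxstarX t h1 htT.le) (hxstarX _ (by omega) htT)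
      (hxstarfeas t h1 htT.le) hBt
  have hΨ₁ : 0 ≤ Ψ 1 := mul_nonneg (hαpos 1).le <| sub_nonneg.2 <| by
    gcongr
    exact hXbdd _ (hxstarX 1 le_rfl hT) _ hx1
  have hΨT : Ψ T ≤ α T * R ^ 2 :=
    mul_le_mul_of_nonneg_left (sub_le_self _ (sq_nonneg _)) (hαpos T).le
  have hrounds := sum_Ico_le_of_le_add_sub hT (mul_nonneg hD hR.le) hΨ₁ hΨT hround
  rw [← mul_sum, sum_add_distrib, sum_add_distrib, ← mul_sum, ← mul_sum, ← mul_sum] at hrounds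
  rw [sum_comm, sum_Icc_one_eq_add_sum_Ico_one _ hT, sum_Icc_two_eq_sum_Ico_one,
    sum_Icc_two_eq_sum_Ico_one]
  simp only [Nat.add_sub_cancel]
  set SB := ∑ t ∈ Ico 1 T, B (t + 1)
  set SX := ∑ t ∈ Ico 1 T, α t * ‖xstar (t + 1) - xstar t‖
  set SA := ∑ t ∈ Icc 1 T, 1 / α t
  have hinv : ∑ t ∈ Ico 1 T, D ^ 2 / (4 * α t) ≤ D ^ 2 / 4 * SA := by
    simp only [SA, mul_sum, mul_one_div, div_div]
    exact sum_le_sum_of_subset_of_nonneg Ico_subset_Icc_self fun t _ _ ↦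
      div_nonneg (sq_nonneg D) (mul_pos four_pos (hαpos t)).le
  have hfirst : ∑ n, max (g 1 n (x 1)) 0 ≤ N * G := by
    simpa using sum_le_sum fun n (_ : n ∈ univ) ↦
      max_le ((le_abs_self _).trans (hgG 1 n _ hx1)) ((abs_nonneg _).trans (hgG 1 n _ hx1))
  have hSB : 0 ≤ SB := sum_nonneg fun t ht ↦ by
    obtain ⟨h1, htT⟩ := mem_Ico.1 ht
    exact hB0 _ (by omega) htT
  have hγB : γ * (√N * SB) ≤ G / η * (√N * SB) := by gcongr
  rw [← mul_le_mul_iff_of_pos_left hγ0]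
  have hexpand : γ * (G * √N / (η * γ) * SB + 2 * R / γ * SX + D ^ 2 / (4 * γ) * SA
      + (D * R + 2 * N * G ^ 2) * T / γ + R ^ 2 * α T / γ + N * G)
      = G / η * (√N * SB) + 2 * R * SX + D ^ 2 / 4 * SA + (D * R + 2 * N * G ^ 2) * T
        + R ^ 2 * α T + γ * (N * G) := by
    field_simp
  rw [hexpand]
  have hNG : 0 ≤ 2 * N * G ^ 2 * T := by positivity
  linarith [mul_le_mul_of_nonneg_left hfirst hγ0.le]

/-- Hard constraint violation bound of COLDQ (Theorem 2). -/
theorem coldq_hard_violation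
    (p N T : ℕ) (hT : 1 ≤ T) (R D G η γ : ℝ)
    (hR : 0 < R)
    (𝒳 : Set (EuclideanSpace ℝ (Fin p)))
    (hXconv : Convex ℝ 𝒳)
    (hXbdd : ∀ x ∈ 𝒳, ∀ y ∈ 𝒳, ‖x - y‖ ≤ R)
    (f : ℕ → EuclideanSpace ℝ (Fin p) → ℝ)
    (hfconv : ∀ t, ConvexOn ℝ 𝒳 (f t))
    (gradf : ℕ → EuclideanSpace ℝ (Fin p) → EuclideanSpace ℝ (Fin p))
    (hgradD : ∀ t, ∀ x ∈ 𝒳, ‖gradf t x‖ ≤ D)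
    (hsub : ∀ t, ∀ x ∈ 𝒳, ∀ y ∈ 𝒳, f t x + ⟪gradf t x, y - x⟫ ≤ f t y)
    (g : ℕ → Fin N → EuclideanSpace ℝ (Fin p) → ℝ)
    (hgconv : ∀ t n, ConvexOn ℝ 𝒳 (g t n))
    (hgG : ∀ t n, ∀ x ∈ 𝒳, |g t n x| ≤ G)
    (α : ℕ → ℝ) (hαpos : ∀ t, 0 < α t) (hαmono : Monotone α)
    (hη0 : 0 < η) (hη1 : η < 1) (hγ0 : 0 < γ) (hγG : γ < G / η)
    (x : ℕ → EuclideanSpace ℝ (Fin p)) (hx1 : x 1 ∈ 𝒳)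
    (Q : ℕ → Fin N → ℝ) (hQ1 : ∀ n, Q 1 n = γ)
    (hxX : ∀ t, 2 ≤ t → t ≤ T → x t ∈ 𝒳)
    (hxmin : ∀ t, 2 ≤ t → t ≤ T → ∀ y ∈ 𝒳,
      ⟪gradf (t - 1) (x (t - 1)), x t - x (t - 1)⟫
          + α (t - 1) * ‖x t - x (t - 1)‖ ^ 2
          + ∑ n, Q (t - 1) n * max (g (t - 1) n (x t)) 0 ≤
        ⟪gradf (t - 1) (x (t - 1)), y - x (t - 1)⟫
          + α (t - 1) * ‖y - x (t - 1)‖ ^ 2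
          + ∑ n, Q (t - 1) n * max (g (t - 1) n y) 0)
    (hQupd : ∀ t, 2 ≤ t → t ≤ T → ∀ n,
      Q t n = max ((1 - η) * Q (t - 1) n + max (g t n (x t)) 0) γ)
    (xstar : ℕ → EuclideanSpace ℝ (Fin p))
    (hxstarX : ∀ t, 1 ≤ t → t ≤ T → xstar t ∈ 𝒳)
    (hxstarfeas : ∀ t, 1 ≤ t → t ≤ T → ∀ n, g t n (xstar t) ≤ 0)
    (B : ℕ → ℝ) (hB0 : ∀ t, 2 ≤ t → t ≤ T → 0 ≤ B t)
    (hB : ∀ t, 2 ≤ t → t ≤ T → ∀ x ∈ 𝒳,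
      Real.sqrt (∑ n, (g t n x - g (t - 1) n x) ^ 2) ≤ B t) :
    ∑ n : Fin N, ∑ t ∈ Finset.Icc 1 T, max (g t n (x t)) 0 ≤
      (G * Real.sqrt N / (η * γ)) * ∑ t ∈ Finset.Icc 2 T, B t
        + (2 * R / γ) * ∑ t ∈ Finset.Icc 2 T, α (t - 1) * ‖xstar t - xstar (t - 1)‖
        + (D ^ 2 / (4 * γ)) * ∑ t ∈ Finset.Icc 1 T, (1 / α t)
        + (D * R + 2 * N * G ^ 2) * T / γ
        + R ^ 2 * α T / γ + N * G :=
  coldq_hard_violation_general p N T hT R D G η γ hR 𝒳 hXconv hXbdd gradf hgradD g hgconv hgG α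
    hαpos hαmono hγ0 hγG x hx1 Q hQ1 hxX hxmin hQupd xstar hxstarX hxstarfeas B hB0 hB
end

section
/- Consider horizon T ≥ 1 and the COLDQ setup: 𝒳 ⊆ ℝ^p convex with ‖x − y‖ ≤ R for all x, y ∈ 𝒳 (R > 0); convex losses f_t with subgradient maps ∇f_t satisfying ‖∇f_t(x)‖ ≤ D and f_t(y) ≥ f_t(x) + ⟨∇f_t(x), y − x⟩ on 𝒳; convex constraints g_t^n with |g_t^n(x)| ≤ G on 𝒳; parameters η ∈ (0,1), γ ∈ (0, G/η); step sizes α_t = t^{(1−V_x)/2} for some fixed V_x ∈ [0,1]; x_1 ∈ 𝒳 arbitrary, Q_1^n = γ, and for t ∈ {2,…,T}: x_t minimizes Φ_t(x) = ⟨∇f_{t−1}(x_{t−1}), x − x_{t−1}⟩ + α_{t−1}·‖x − x_{t−1}‖² + Σ_{n=1}^N Q_{t−1}^n·[g_{t−1}^n(x)]_+ over 𝒳 and Q_t^n = max{(1−η)·Q_{t−1}^n + [g_t^n(x_t)]_+ , γ}. Suppose the benchmark path length satisfies Σ_{t=2}^T ‖x_t* − x_{t−1}*‖ ≤ C_x·T^{V_x}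 for a constant C_x ≥ 0, where each x_t* ∈ 𝒳 satisfies g_t^n(x_t*) ≤ 0 for all n. Then the dynamic regret satisfies Σ_{t=1}^T [f_t(x_t) − f_t(x_t*)] ≤ (2·R·C_x + D²/(2·(1+V_x)) + R² + D·R)·T^{(1+V_x)/2}. -/
/-!
Each iterate minimises a `2α_t`-strongly convex function (linearised loss, proximal term and
penalty), so comparing the minimiser with the feasible benchmark `x_t*`, where the penalty
vanishes, and using `D r - α_t r² ≤ D² / (4 α_t)` gives
`f_t(x_t) - f_t(x_t*) ≤ D²/(4α_t) + α_t (‖x_t - x_t*‖² - ‖x_{t+1} - x_{t+1}*‖²)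
  + 2 R α_t ‖x_{t+1}* - x_t*‖`.
Summing over `t < T`, the middle terms telescope against the increasing `α_t` to at most
`α_T R²`, the last ones are bounded by `2 R α_T` times the path length, and
`∑_{t ≤ T} t^(-(1 - V)/2) ≤ T^((1 + V)/2) / ((1 + V)/2)`; the last round costs at most `D R`.
-/

open scoped RealInnerProductSpace

open Finset

section LinearSpace

variable {E : Type*} [AddCommGroup E] [Module ℝ E] {s : Set E}

theorem ConvexOn.fun_sum {ι : Type*} {t : Finset ι} {f : ι → E → ℝ} (hs : Convex ℝ s)
    (hf : ∀ i ∈ t, ConvexOn ℝ s (f i)) : ConvexOn ℝ s fun x ↦ ∑ i ∈ t, f i x := by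
  classical
  induction t using Finset.induction_on with
  | empty => simpa using convexOn_const 0 hs
  | insert i t hi ih =>
    simp_rw [sum_insert hi]
    exact (hf i (mem_insert_self i t)).add (ih fun j hj ↦ hf j (mem_insert_of_mem hj))

theorem convexOn_penalty {ι : Type*} [Fintype ι] {Q : ι → ℝ} {g : ι → E → ℝ} (hs : Convex ℝ s)
    (hQ : ∀ n, 0 ≤ Q n) (hg : ∀ n, ConvexOn ℝ s (g n)) :
    ConvexOn ℝ s fun y ↦ ∑ n, Q n * max (g n y) 0 :=
  ConvexOn.fun_sum hs fun n _ ↦ ((hg n).sup (convexOn_const 0 hs)).smul (hQ n)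

end LinearSpace

section NormedSpace

variable {E : Type*} [NormedAddCommGroup E] [NormedSpace ℝ E] {s : Set E}

theorem StrongConvexOn.add_sq_norm_sub_le_of_isMinOn {f : E → ℝ} {m : ℝ} {z y : E}
    (hf : StrongConvexOn s m f) (hmin : IsMinOn f s z) (hz : z ∈ s) (hy : y ∈ s) :
    f z + m / 2 * ‖z - y‖ ^ 2 ≤ f y := by
  have hclose : ∀ l ∈ Set.Ioc (0 : ℝ) 1, f z + (1 - l) * (m / 2 * ‖z - y‖ ^ 2) ≤ f y := by
    rintro l ⟨hl0, hl1⟩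
    have hconv := hf.2 hz hy (sub_nonneg.2 hl1) hl0.le (sub_add_cancel 1 l)
    have hmin' := isMinOn_iff.1 hmin _ (hf.1 hz hy (sub_nonneg.2 hl1) hl0.le (sub_add_cancel 1 l))
    simp only [smul_eq_mul] at hconv
    nlinarith
  have hlim : Filter.Tendsto (fun l : ℝ ↦ f z + (1 - l) * (m / 2 * ‖z - y‖ ^ 2))
      (nhdsWithin 0 (Set.Ioi 0)) (nhds (f z + m / 2 * ‖z - y‖ ^ 2)) := by
    have hcont : Continuous fun l : ℝ ↦ f z + (1 - l) * (m / 2 * ‖z - y‖ ^ 2) := by fun_prop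
    exact (hcont.tendsto' 0 _ (by simp)).mono_left nhdsWithin_le_nhds
  exact le_of_tendsto hlim (Filter.mem_of_superset (Ioc_mem_nhdsGT one_pos) hclose)

omit [NormedSpace ℝ E] in
theorem norm_sq_sub_norm_sq_le {u w : E} {R : ℝ} (hu : ‖u‖ ≤ R) (hw : ‖w‖ ≤ R) :
    ‖u‖ ^ 2 - ‖w‖ ^ 2 ≤ 2 * R * ‖u - w‖ := by
  have h := norm_sub_norm_le u w
  nlinarith [norm_nonneg u, norm_nonneg w, norm_nonneg (u - w),
    mul_le_mul_of_nonneg_right h (add_nonneg (norm_nonneg u) (norm_nonneg w))]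

end NormedSpace

section InnerProductSpace

variable {E : Type*} [NormedAddCommGroup E] [InnerProductSpace ℝ E] {s : Set E}

theorem ConvexOn.strongConvexOn_proximal {S : E → ℝ} (hS : ConvexOn ℝ s S) (v c : E) (a : ℝ) :
    StrongConvexOn s (2 * a) fun w ↦ ⟪v, w - c⟫ + a * ‖w - c‖ ^ 2 + S w := by
  rw [strongConvexOn_iff_convex]
  have hsplit : (fun w ↦ ⟪v, w - c⟫ + a * ‖w - c‖ ^ 2 + S w - 2 * a / 2 * ‖w‖ ^ 2) =
      fun w ↦ innerₗ E (v - (2 * a) • c) w + (a * ‖c‖ ^ 2 - ⟪v, c⟫) + S w := by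
    funext w
    rw [innerₗ_apply_apply, norm_sub_sq_real, inner_sub_right, inner_sub_left, real_inner_smul_left,
      real_inner_comm c w]
    ring
  rw [hsplit]
  exact (((innerₗ E (v - (2 * a) • c)).convexOn hS.1).add_const _).add hS

theorem neg_inner_le_mul_norm {v : E} {D : ℝ} (hv : ‖v‖ ≤ D) (w : E) : -⟪v, w⟫ ≤ D * ‖w‖ :=
  calc -⟪v, w⟫ ≤ ‖v‖ * ‖w‖ := (neg_le_abs _).trans (abs_real_inner_le_norm v w)
    _ ≤ D * ‖w‖ := mul_le_mul_of_nonneg_right hv (norm_nonneg w)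

/-- One round of the method: `c` is the current iterate with (sub)gradient `v`, `z` the next one,
`y` and `y'` the current and next benchmark points, `S` the penalty. -/
theorem proximal_step_regret_le {R D a : ℝ}
    (hsR : ∀ x ∈ s, ∀ y ∈ s, ‖x - y‖ ≤ R) {f S : E → ℝ} (hS : ConvexOn ℝ s S) {v c z y y' : E}
    (hv : ‖v‖ ≤ D) (ha : 0 < a) (hz : z ∈ s) (hy : y ∈ s) (hy' : y' ∈ s)
    (hmin : IsMinOn (fun w ↦ ⟪v, w - c⟫ + a * ‖w - c‖ ^ 2 + S w) s z) (hSy : S y ≤ S z)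
    (hsub : f c + ⟪v, y - c⟫ ≤ f y) :
    f c - f y ≤ D ^ 2 / (4 * a) + a * (‖c - y‖ ^ 2 - ‖z - y'‖ ^ 2) + 2 * R * a * ‖y' - y‖ := by
  have hprox := (hS.strongConvexOn_proximal v c a).add_sq_norm_sub_le_of_isMinOn hmin hz hy
  have hyoung : D * ‖z - c‖ - a * ‖z - c‖ ^ 2 ≤ D ^ 2 / (4 * a) := by
    rw [le_div_iff₀ (by positivity)]
    nlinarith [sq_nonneg (D - 2 * a * ‖z - c‖)]
  have hshift : ‖z - y'‖ ^ 2 - ‖z - y‖ ^ 2 ≤ 2 * R * ‖y' - y‖ := by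
    simpa [norm_sub_rev y y'] using norm_sq_sub_norm_sq_le (hsR z hz y' hy') (hsR z hz y hy)
  have := neg_inner_le_mul_norm hv (z - c)
  rw [norm_sub_rev c y]
  nlinarith [mul_le_mul_of_nonneg_left hshift ha.le]

end InnerProductSpace

theorem Real.one_sub_mul_inv_rpow_le_rpow_sub_rpow {β x : ℝ} (hβ0 : 0 ≤ β) (hβ1 : β ≤ 1)
    (hx : 1 ≤ x) : (1 - β) * (x ^ β)⁻¹ ≤ x ^ (1 - β) - (x - 1) ^ (1 - β) := by
  have hx0 : 0 < x := by linarith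
  have hbern : (1 + -x⁻¹) ^ (1 - β) ≤ 1 + (1 - β) * -x⁻¹ :=
    rpow_one_add_le_one_add_mul_self (by linarith [inv_le_one_of_one_le₀ hx])
      (by linarith) (by linarith)
  have hfac : (x - 1) ^ (1 - β) = x ^ (1 - β) * (1 + -x⁻¹) ^ (1 - β) := by
    rw [← Real.mul_rpow hx0.le (by linarith [inv_le_one_of_one_le₀ hx])]
    field_simp
    ring_nf
  have hinv : (x ^ β)⁻¹ = x ^ (1 - β) * x⁻¹ := by
    rw [Real.rpow_sub hx0, Real.rpow_one]
    field_simp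
  rw [hfac, hinv]
  nlinarith [mul_le_mul_of_nonneg_left hbern (Real.rpow_nonneg hx0.le (1 - β))]

theorem sum_Icc_inv_rpow_le {β : ℝ} (hβ0 : 0 ≤ β) (hβ1 : β < 1) (n : ℕ) :
    ∑ t ∈ Icc 1 n, ((t : ℝ) ^ β)⁻¹ ≤ (n : ℝ) ^ (1 - β) / (1 - β) := by
  induction n with
  | zero => simp [Real.zero_rpow (sub_ne_zero.2 hβ1.ne')]
  | succ n ih =>
    rw [sum_Icc_succ_top (by omega), le_div_iff₀ (sub_pos.2 hβ1)]
    have hstep := Real.one_sub_mul_inv_rpow_le_rpow_sub_rpow hβ0 hβ1.le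
      (by exact_mod_cast Nat.le_add_left 1 n : (1 : ℝ) ≤ (n + 1 : ℕ))
    rw [le_div_iff₀ (sub_pos.2 hβ1)] at ih
    push_cast at hstep ⊢
    simp only [add_sub_cancel_right] at hstep
    nlinarith

theorem sum_Ico_mul_sub_le {a d : ℕ → ℝ} {B : ℝ} {T : ℕ} (hT : 1 ≤ T) (ha : Monotone a)
    (ha1 : 0 ≤ a 1) (hd : ∀ t, 0 ≤ d t) (hdB : ∀ t ∈ Icc 1 T, d t ≤ B) :
    ∑ t ∈ Ico 1 T, a t * (d t - d (t + 1)) ≤ a T * B := by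
  suffices h : ∀ T, 1 ≤ T → (∀ t ∈ Icc 1 T, d t ≤ B) →
      ∑ t ∈ Ico 1 T, a t * (d t - d (t + 1)) ≤ a T * (B - d T) by
    nlinarith [h T hT hdB, hd T, ha1.trans (ha hT)]
  intro T hT
  induction T, hT using Nat.le_induction with
  | base => intro hdB; simpa using mul_nonneg ha1 (sub_nonneg.2 (hdB 1 (by simp)))
  | succ T hT ih =>
    intro hdB
    have hprev := ih fun t ht ↦ hdB t (Icc_subset_Icc_right (Nat.le_succ T) ht)
    have hdT : d (T + 1) ≤ B := hdB (T + 1) (mem_Icc.2 ⟨by omega, le_rfl⟩)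
    have hmono := mul_le_mul_of_nonneg_right (ha (Nat.le_succ T)) (sub_nonneg.2 hdT)
    rw [sum_Ico_succ_top hT]
    nlinarith

theorem coldq_dynamic_regret_le {E ι : Type*} [NormedAddCommGroup E] [InnerProductSpace ℝ E]
    [Fintype ι] {𝒳 : Set E} {R D : ℝ} {T : ℕ} {f : ℕ → E → ℝ} {gradf : ℕ → E → E}
    {g : ℕ → ι → E → ℝ} {α : ℕ → ℝ} {Q : ℕ → ι → ℝ} {x xstar : ℕ → E} (hT : 1 ≤ T)
    (hX : Convex ℝ 𝒳) (hXR : ∀ x ∈ 𝒳, ∀ y ∈ 𝒳, ‖x - y‖ ≤ R)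
    (hgradD : ∀ t, ∀ x ∈ 𝒳, ‖gradf t x‖ ≤ D)
    (hsub : ∀ t, ∀ x ∈ 𝒳, ∀ y ∈ 𝒳, f t x + ⟪gradf t x, y - x⟫ ≤ f t y)
    (hg : ∀ t n, ConvexOn ℝ 𝒳 (g t n)) (hα : Monotone α) (hα_pos : ∀ t, 1 ≤ t → 0 < α t)
    (hQ : ∀ t, 1 ≤ t → t < T → ∀ n, 0 ≤ Q t n) (hx : ∀ t, 1 ≤ t → t ≤ T → x t ∈ 𝒳)
    (hxmin : ∀ t, 1 ≤ t → t < T → IsMinOn (fun y ↦ ⟪gradf t (x t), y - x t⟫ +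
      α t * ‖y - x t‖ ^ 2 + ∑ n, Q t n * max (g t n y) 0) 𝒳 (x (t + 1)))
    (hxstar : ∀ t, 1 ≤ t → t ≤ T → xstar t ∈ 𝒳)
    (hfeas : ∀ t, 1 ≤ t → t ≤ T → ∀ n, g t n (xstar t) ≤ 0) :
    ∑ t ∈ Icc 1 T, (f t (x t) - f t (xstar t)) ≤
      D ^ 2 / 4 * ∑ t ∈ Ico 1 T, (α t)⁻¹ + α T * R ^ 2
        + 2 * R * α T * ∑ t ∈ Icc 2 T, ‖xstar t - xstar (t - 1)‖ + D * R := by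
  have hstep : ∀ t ∈ Ico 1 T, f t (x t) - f t (xstar t) ≤ D ^ 2 / 4 * (α t)⁻¹
      + α t * (‖x t - xstar t‖ ^ 2 - ‖x (t + 1) - xstar (t + 1)‖ ^ 2)
      + 2 * R * α T * ‖xstar (t + 1) - xstar t‖ := by
    intro t ht
    obtain ⟨ht1, htT⟩ := mem_Ico.1 ht
    have hR : 0 ≤ R := (norm_nonneg _).trans (hXR _ (hx t ht1 htT.le) _ (hx t ht1 htT.le))
    have hpen : 0 ≤ ∑ n, Q t n * max (g t n (x (t + 1))) 0 :=
      sum_nonneg fun n _ ↦ mul_nonneg (hQ t ht1 htT n) (le_max_right _ _)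
    have hfeas' : ∑ n, Q t n * max (g t n (xstar t)) 0 = 0 :=
      sum_eq_zero fun n _ ↦ by rw [max_eq_right (hfeas t ht1 htT.le n), mul_zero]
    have h := proximal_step_regret_le hXR (convexOn_penalty hX (hQ t ht1 htT) (hg t))
      (hgradD t _ (hx t ht1 htT.le)) (hα_pos t ht1) (hx (t + 1) (by omega) htT)
      (hxstar t ht1 htT.le) (hxstar (t + 1) (by omega) htT) (hxmin t ht1 htT)
      (hfeas'.trans_le hpen) (hsub t _ (hx t ht1 htT.le) _ (hxstar t ht1 htT.le))
    have hαT : α t * ‖xstar (t + 1) - xstar t‖ ≤ α T * ‖xstar (t + 1) - xstar t‖ :=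
      mul_le_mul_of_nonneg_right (hα htT.le) (norm_nonneg _)
    have hinv : D ^ 2 / (4 * α t) = D ^ 2 / 4 * (α t)⁻¹ := by ring
    nlinarith
  have hlast : f T (x T) - f T (xstar T) ≤ D * R := by
    have hxT := hx T hT le_rfl
    have hxsT := hxstar T hT le_rfl
    have := neg_inner_le_mul_norm (hgradD T _ hxT) (xstar T - x T)
    nlinarith [hsub T _ hxT _ hxsT, hXR _ hxsT _ hxT, (norm_nonneg _).trans (hgradD T _ hxT)]
  have htel := sum_Ico_mul_sub_le (d := fun t ↦ ‖x t - xstar t‖ ^ 2) (B := R ^ 2) hT hα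
    (hα_pos 1 le_rfl).le (fun t ↦ by positivity) fun t ht ↦ by
      obtain ⟨ht1, htT⟩ := mem_Icc.1 ht
      have := hXR _ (hx t ht1 htT) _ (hxstar t ht1 htT)
      exact pow_le_pow_left₀ (norm_nonneg _) this 2
  have hpath : ∑ t ∈ Ico 1 T, ‖xstar (t + 1) - xstar t‖ =
      ∑ t ∈ Icc 2 T, ‖xstar t - xstar (t - 1)‖ := by
    rw [← Finset.Ico_add_one_right_eq_Icc]
    simpa using sum_Ico_add' (fun t ↦ ‖xstar t - xstar (t - 1)‖) 1 T 1
  rw [← Finset.Ico_add_one_right_eq_Icc, sum_Ico_succ_top hT, ← hpath, mul_sum, mul_sum]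
  grw [sum_le_sum hstep, hlast]
  simp only [sum_add_distrib]
  linarith

theorem regret_bound_rpow_le {T : ℕ} (hT : 1 ≤ T) {R D C V P : ℝ} (hR : 0 ≤ R) (hD : 0 ≤ D)
    (hV0 : 0 ≤ V) (hV1 : V ≤ 1) (hP : P ≤ C * (T : ℝ) ^ V) :
    D ^ 2 / 4 * ∑ t ∈ Ico 1 T, ((t : ℝ) ^ ((1 - V) / 2))⁻¹ + (T : ℝ) ^ ((1 - V) / 2) * R ^ 2
        + 2 * R * (T : ℝ) ^ ((1 - V) / 2) * P + D * R ≤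
      (2 * R * C + D ^ 2 / (2 * (1 + V)) + R ^ 2 + D * R) * (T : ℝ) ^ ((1 + V) / 2) := by
  have hT1 : (1 : ℝ) ≤ T := by exact_mod_cast hT
  have hsum : ∑ t ∈ Ico 1 T, ((t : ℝ) ^ ((1 - V) / 2))⁻¹ ≤
      (T : ℝ) ^ ((1 + V) / 2) / ((1 + V) / 2) := by
    have h := sum_Icc_inv_rpow_le (β := (1 - V) / 2) (by linarith) (by linarith) T
    rw [show 1 - (1 - V) / 2 = (1 + V) / 2 by ring] at h
    exact (sum_le_sum_of_subset_of_nonneg Ico_subset_Icc_self fun t _ _ ↦ by positivity).trans h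
  have hexp : (T : ℝ) ^ ((1 - V) / 2) * (T : ℝ) ^ V = (T : ℝ) ^ ((1 + V) / 2) := by
    rw [← Real.rpow_add (by linarith)]; ring_nf
  have hle : (T : ℝ) ^ ((1 - V) / 2) ≤ (T : ℝ) ^ ((1 + V) / 2) :=
    Real.rpow_le_rpow_of_exponent_le hT1 (by linarith)
  have hone : 1 ≤ (T : ℝ) ^ ((1 + V) / 2) := Real.one_le_rpow hT1 (by linarith)
  calc _ ≤ D ^ 2 / 4 * ((T : ℝ) ^ ((1 + V) / 2) / ((1 + V) / 2))
        + (T : ℝ) ^ ((1 + V) / 2) * R ^ 2 + 2 * R * (T : ℝ) ^ ((1 - V) / 2) * (C * (T : ℝ) ^ V)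
        + D * R * (T : ℝ) ^ ((1 + V) / 2) := by
        gcongr ?_ + ?_ + ?_ + ?_
        · exact mul_le_mul_of_nonneg_left hsum (by positivity)
        · exact mul_le_mul_of_nonneg_right hle (by positivity)
        · exact mul_le_mul_of_nonneg_left hP (by positivity)
        · exact le_mul_of_one_le_right (by positivity) hone
    _ = _ := by rw [← hexp]; field_simp; ring

theorem coldq_dynamic_regret_explicit_general
    (p N T : ℕ) (hT : 1 ≤ T) (R D η γ Vx Cx : ℝ)
    (hR : 0 < R) (hVx0 : 0 ≤ Vx) (hVx1 : Vx ≤ 1)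
    (𝒳 : Set (EuclideanSpace ℝ (Fin p)))
    (hXconv : Convex ℝ 𝒳)
    (hXbdd : ∀ x ∈ 𝒳, ∀ y ∈ 𝒳, ‖x - y‖ ≤ R)
    (f : ℕ → EuclideanSpace ℝ (Fin p) → ℝ)
    (gradf : ℕ → EuclideanSpace ℝ (Fin p) → EuclideanSpace ℝ (Fin p))
    (hgradD : ∀ t, ∀ x ∈ 𝒳, ‖gradf t x‖ ≤ D)
    (hsub : ∀ t, ∀ x ∈ 𝒳, ∀ y ∈ 𝒳, f t x + ⟪gradf t x, y - x⟫ ≤ f t y)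
    (g : ℕ → Fin N → EuclideanSpace ℝ (Fin p) → ℝ)
    (hgconv : ∀ t n, ConvexOn ℝ 𝒳 (g t n))
    (α : ℕ → ℝ) (hα : ∀ t, α t = (t : ℝ) ^ ((1 - Vx) / 2))
    (hγ0 : 0 < γ)
    (x : ℕ → EuclideanSpace ℝ (Fin p)) (hx1 : x 1 ∈ 𝒳)
    (Q : ℕ → Fin N → ℝ) (hQ1 : ∀ n, Q 1 n = γ)
    (hxX : ∀ t, 2 ≤ t → t ≤ T → x t ∈ 𝒳)
    (hxmin : ∀ t, 2 ≤ t → t ≤ T → ∀ y ∈ 𝒳,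
      ⟪gradf (t - 1) (x (t - 1)), x t - x (t - 1)⟫
          + α (t - 1) * ‖x t - x (t - 1)‖ ^ 2
          + ∑ n, Q (t - 1) n * max (g (t - 1) n (x t)) 0 ≤
        ⟪gradf (t - 1) (x (t - 1)), y - x (t - 1)⟫
          + α (t - 1) * ‖y - x (t - 1)‖ ^ 2
          + ∑ n, Q (t - 1) n * max (g (t - 1) n y) 0)
    (hQupd : ∀ t, 2 ≤ t → t ≤ T → ∀ n,
      Q t n = max ((1 - η) * Q (t - 1) n + max (g t n (x t)) 0) γ)
    (xstar : ℕ → EuclideanSpace ℝ (Fin p))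
    (hxstarX : ∀ t, 1 ≤ t → t ≤ T → xstar t ∈ 𝒳)
    (hxstarfeas : ∀ t, 1 ≤ t → t ≤ T → ∀ n, g t n (xstar t) ≤ 0)
    (hpath : ∑ t ∈ Finset.Icc 2 T, ‖xstar t - xstar (t - 1)‖ ≤ Cx * (T : ℝ) ^ Vx) :
    ∑ t ∈ Finset.Icc 1 T, (f t (x t) - f t (xstar t)) ≤
      (2 * R * Cx + D ^ 2 / (2 * (1 + Vx)) + R ^ 2 + D * R)
        * (T : ℝ) ^ ((1 + Vx) / 2) := by
  obtain rfl : α = fun t : ℕ ↦ (t : ℝ) ^ ((1 - Vx) / 2) := funext hα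
  have hD : 0 ≤ D := (norm_nonneg _).trans (hgradD 0 _ hx1)
  have hQ : ∀ t, 1 ≤ t → t < T → ∀ n, 0 ≤ Q t n := by
    intro t ht1 htT n
    rcases ht1.eq_or_lt with rfl | ht
    · exact (hQ1 n).symm ▸ hγ0.le
    · exact (hQupd t ht htT.le n).symm ▸ hγ0.le.trans (le_max_right _ _)
  have hx : ∀ t, 1 ≤ t → t ≤ T → x t ∈ 𝒳 := fun t ht1 htT ↦
    ht1.eq_or_lt.elim (fun h ↦ h ▸ hx1) fun h ↦ hxX t h htT
  refine (coldq_dynamic_regret_le (α := fun t : ℕ ↦ (t : ℝ) ^ ((1 - Vx) / 2)) hT hXconv hXbdd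
    hgradD hsub hgconv ?_ ?_ hQ hx ?_ hxstarX hxstarfeas).trans
    (regret_bound_rpow_le hT hR.le hD hVx0 hVx1 hpath)
  · exact fun s t hst ↦ Real.rpow_le_rpow (Nat.cast_nonneg s) (Nat.cast_le.2 hst) (by linarith)
  · exact fun t ht ↦ Real.rpow_pos_of_pos (by exact_mod_cast ht) _
  · exact fun t ht1 htT y hy ↦ by simpa using hxmin (t + 1) (by omega) htT y hy

/-- Corollary 1 (regret part): COLDQ with `α_t = t^((1−V_x)/2)` achieves
`O(T^((1+V_x)/2))` dynamic regret, with explicit constant. -/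
theorem coldq_dynamic_regret_explicit
    (p N T : ℕ) (hT : 1 ≤ T) (R D G η γ Vx Cx : ℝ)
    (hR : 0 < R) (hVx0 : 0 ≤ Vx) (hVx1 : Vx ≤ 1) (hCx : 0 ≤ Cx)
    (𝒳 : Set (EuclideanSpace ℝ (Fin p)))
    (hXconv : Convex ℝ 𝒳)
    (hXbdd : ∀ x ∈ 𝒳, ∀ y ∈ 𝒳, ‖x - y‖ ≤ R)
    (f : ℕ → EuclideanSpace ℝ (Fin p) → ℝ)
    (hfconv : ∀ t, ConvexOn ℝ 𝒳 (f t))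
    (gradf : ℕ → EuclideanSpace ℝ (Fin p) → EuclideanSpace ℝ (Fin p))
    (hgradD : ∀ t, ∀ x ∈ 𝒳, ‖gradf t x‖ ≤ D)
    (hsub : ∀ t, ∀ x ∈ 𝒳, ∀ y ∈ 𝒳, f t x + ⟪gradf t x, y - x⟫ ≤ f t y)
    (g : ℕ → Fin N → EuclideanSpace ℝ (Fin p) → ℝ)
    (hgconv : ∀ t n, ConvexOn ℝ 𝒳 (g t n))
    (hgG : ∀ t n, ∀ x ∈ 𝒳, |g t n x| ≤ G)
    (α : ℕ → ℝ) (hα : ∀ t, α t = (t : ℝ) ^ ((1 - Vx) / 2))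
    (hη0 : 0 < η) (hη1 : η < 1) (hγ0 : 0 < γ) (hγG : γ < G / η)
    (x : ℕ → EuclideanSpace ℝ (Fin p)) (hx1 : x 1 ∈ 𝒳)
    (Q : ℕ → Fin N → ℝ) (hQ1 : ∀ n, Q 1 n = γ)
    (hxX : ∀ t, 2 ≤ t → t ≤ T → x t ∈ 𝒳)
    (hxmin : ∀ t, 2 ≤ t → t ≤ T → ∀ y ∈ 𝒳,
      ⟪gradf (t - 1) (x (t - 1)), x t - x (t - 1)⟫
          + α (t - 1) * ‖x t - x (t - 1)‖ ^ 2
          + ∑ n, Q (t - 1) n * max (g (t - 1) n (x t)) 0 ≤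
        ⟪gradf (t - 1) (x (t - 1)), y - x (t - 1)⟫
          + α (t - 1) * ‖y - x (t - 1)‖ ^ 2
          + ∑ n, Q (t - 1) n * max (g (t - 1) n y) 0)
    (hQupd : ∀ t, 2 ≤ t → t ≤ T → ∀ n,
      Q t n = max ((1 - η) * Q (t - 1) n + max (g t n (x t)) 0) γ)
    (xstar : ℕ → EuclideanSpace ℝ (Fin p))
    (hxstarX : ∀ t, 1 ≤ t → t ≤ T → xstar t ∈ 𝒳)
    (hxstarfeas : ∀ t, 1 ≤ t → t ≤ T → ∀ n, g t n (xstar t) ≤ 0)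
    (hpath : ∑ t ∈ Finset.Icc 2 T, ‖xstar t - xstar (t - 1)‖ ≤ Cx * (T : ℝ) ^ Vx) :
    ∑ t ∈ Finset.Icc 1 T, (f t (x t) - f t (xstar t)) ≤
      (2 * R * Cx + D ^ 2 / (2 * (1 + Vx)) + R ^ 2 + D * R)
        * (T : ℝ) ^ ((1 + Vx) / 2) :=
  coldq_dynamic_regret_explicit_general p N T hT R D η γ Vx Cx hR hVx0 hVx1 𝒳 hXconv hXbdd f gradf
    hgradD hsub g hgconv α hα hγ0 x hx1 Q hQ1 hxX hxmin hQupd xstar hxstarX hxstarfeas hpath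
end

section
/- Let G > 0, η ∈ (0,1), and γ ∈ (0, G/η). Let Q be a real number with γ ≤ Q ≤ G/η, let a be a real with |a| ≤ G, let b be any real, and define Q' = max{(1−η)·Q + [a]_+ , γ}. Then (1/2)·(Q' − γ)² ≤ (1/2)·(Q − γ)² + 2·G² + Q·[b]_+ + (G/η)·|a − b| − γ·[a]_+. -/
/-- Scalar one-step Lyapunov drift inequality at the core of COLDQ's
drift analysis. -/
theorem coldq_scalar_drift
    (G η γ Q a b : ℝ)
    (hG : 0 < G) (hη0 : 0 < η) (hη1 : η < 1)
    (hγ0 : 0 < γ) (hγG : γ < G / η)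
    (hQl : γ ≤ Q) (hQu : Q ≤ G / η) (ha : |a| ≤ G) :
    (1 / 2) * (max ((1 - η) * Q + max a 0) γ - γ) ^ 2 ≤
      (1 / 2) * (Q - γ) ^ 2 + 2 * G ^ 2 + Q * max b 0
        + (G / η) * |a - b| - γ * max a 0 := by
  have hQ0 : (0:ℝ) ≤ Q := le_trans hγ0.le hQl
  have hmm : max a 0 - max b 0 ≤ |a - b| :=
    le_trans (le_abs_self _) (abs_max_sub_max_le_abs a b 0)
  have hkey : Q * max a 0 ≤ Q * max b 0 + (G / η) * |a - b| := by
    have h1 : Q * (max a 0 - max b 0) ≤ Q * |a - b| :=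
      mul_le_mul_of_nonneg_left hmm hQ0
    have h2 : Q * |a - b| ≤ (G / η) * |a - b| :=
      mul_le_mul_of_nonneg_right hQu (abs_nonneg _)
    rw [mul_sub] at h1; linarith
  rcases le_or_gt ((1 - η) * Q + max a 0) γ with h | h
  · rw [max_eq_right h]
    have hγkey : γ * max a 0 ≤ Q * max a 0 :=
      mul_le_mul_of_nonneg_right hQl (le_max_right a 0)
    nlinarith [sq_nonneg (Q - γ), sq_nonneg G]
  · rw [max_eq_left h.le]
    have hηQ : η * Q ≤ G := by
      have := (le_div_iff₀ hη0).mp hQu; linarith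
    have ha' : max a 0 ≤ G := max_le (le_trans (le_abs_self a) ha) hG.le
    have hd : (max a 0 - η * Q) ^ 2 ≤ G ^ 2 := by
      nlinarith [le_max_right a 0, mul_nonneg hη0.le hQ0]
    have hη2 : 0 ≤ η * Q * (Q - γ) :=
      mul_nonneg (mul_nonneg hη0.le hQ0) (by linarith)
    nlinarith [sq_nonneg G]
end
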